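/- arXiv:1310.2371 — 7 statements merged into one kernel-verified Lean document; each statement's English description precedes it below -/
import Mathlib

section
/- A greedy basis is unconditional: if {x_i} is a Schauder basis of a Banach space X such that for some constant C, for every x = Σ a_i x_i, every n, and every n-element set A ⊂ ℕ with min_{i∈A} |a_i| ≥ max_{i∉A} |a_i|, one has ‖x − Σ_{i∈A} a_i x_i‖ ≤ C inf{‖x − Σ_{i∈B} b_i x_i‖ : |B| = n, b_i ∈ ℝ}, then {x_i} is an unconditional basis (there is K such that ‖Σ ε_i a_i x_i‖ ≤ K ‖Σ a_i x_i‖ for all signs ε_i = ±1 and all finitely supported scalars). -/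
/-!
Suppose the greedy inequality holds with constant `C`. Given `x = Σ aᵢ xᵢ` and a set `D` of
indices, raise the coefficients on `D` to a common value `M ≥ max |aᵢ|`. Then `D` is a greedy
set of the new vector `x'`, and `x' − Σ_{i∈D} (M − aᵢ) xᵢ = x`, so comparing with `B = D`
bounds `‖x − Σ_{i∈D} aᵢ xᵢ‖` by `C ‖x‖`: every coordinate projection has norm at most `C`.
Flipping the signs on a set `N` is `x ↦ x − 2 P_N x`, whence the constant `1 + 2C`.
-/

open Finsupp

section Greedy

variable {ι X : Type*} [NormedAddCommGroup X] [NormedSpace ℝ X]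

def IsGreedyWith (x : ι → X) (C : ℝ) : Prop :=
  ∀ (a : ι →₀ ℝ) (A : Finset ι), (∀ i ∈ A, ∀ j ∉ A, |a j| ≤ |a i|) →
    ∀ B : Finset ι, B.card = A.card → ∀ b : ι → ℝ,
      ‖linearCombination ℝ x a - ∑ i ∈ A, a i • x i‖
        ≤ C * ‖linearCombination ℝ x a - ∑ i ∈ B, b i • x i‖

theorem Finsupp.abs_apply_le_sum_abs (a : ι →₀ ℝ) (j : ι) : |a j| ≤ a.sum fun _ c => |c| := by
  by_cases hj : j ∈ a.support
  · exact Finset.single_le_sum (f := fun i => |a i|) (fun i _ => abs_nonneg _) hj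
  · rw [notMem_support_iff.mp hj, abs_zero]
    exact Finset.sum_nonneg fun i _ => abs_nonneg _

theorem IsGreedyWith.norm_sum_filter_le {x : ι → X} {C : ℝ} (h : IsGreedyWith x C)
    (a : ι →₀ ℝ) (p : ι → Prop) [DecidablePred p] :
    ‖∑ i ∈ a.support with p i, a i • x i‖ ≤ C * ‖linearCombination ℝ x a‖ := by
  classical
  set D := {i ∈ a.support | ¬ p i}
  set M := a.sum fun _ c => |c|
  have hM : 0 ≤ M := Finset.sum_nonneg fun _ _ => abs_nonneg _
  set a' := a + ∑ i ∈ D, single i (M - a i)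
  have ha' : ∀ i, a' i = if i ∈ D then M else a i := by
    intro i
    simp only [a', coe_add, Pi.add_apply, finsetSum_apply, single_apply, Finset.sum_ite_eq']
    split_ifs <;> ring
  have hlc : linearCombination ℝ x a' = linearCombination ℝ x a + ∑ i ∈ D, (M - a i) • x i := by
    simp only [a', map_add, map_sum, linearCombination_single]
  have hD : ∑ i ∈ D, a' i • x i = ∑ i ∈ D, a i • x i + ∑ i ∈ D, (M - a i) • x i := by
    rw [← Finset.sum_add_distrib]
    refine Finset.sum_congr rfl fun i hi => ?_
    rw [ha', if_pos hi]
    module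
  have hdom : ∀ i ∈ D, ∀ j ∉ D, |a' j| ≤ |a' i| := by
    intro i hi j hj
    rw [ha', ha', if_pos hi, if_neg hj, abs_of_nonneg hM]
    exact a.abs_apply_le_sum_abs j
  calc ‖∑ i ∈ a.support with p i, a i • x i‖
      = ‖linearCombination ℝ x a' - ∑ i ∈ D, a' i • x i‖ := by
        rw [hlc, hD, add_sub_add_right_eq_sub, linearCombination_apply, Finsupp.sum,
          ← Finset.sum_filter_add_sum_filter_not a.support p, add_sub_cancel_right]
    _ ≤ C * ‖linearCombination ℝ x a' - ∑ i ∈ D, (M - a i) • x i‖ := h a' D hdom D rfl _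
    _ = C * ‖linearCombination ℝ x a‖ := by rw [hlc, add_sub_cancel_right]

theorem IsGreedyWith.norm_sum_sign_smul_le {x : ι → X} {C : ℝ} (h : IsGreedyWith x C)
    (a : ι →₀ ℝ) {ε : ι → ℝ} (hε : ∀ i, ε i = 1 ∨ ε i = -1) :
    ‖a.sum fun i c => (ε i * c) • x i‖ ≤ (1 + 2 * C) * ‖linearCombination ℝ x a‖ := by
  have hflip : (a.sum fun i c => (ε i * c) • x i)
      = linearCombination ℝ x a - (2 : ℝ) • ∑ i ∈ a.support with ε i = -1, a i • x i := by
    rw [linearCombination_apply, Finsupp.sum, Finsupp.sum, Finset.sum_filter, Finset.smul_sum,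
      ← Finset.sum_sub_distrib]
    refine Finset.sum_congr rfl fun i _ => ?_
    rcases hε i with hi | hi
    · norm_num [hi]
    · norm_num [hi]
      module
  calc ‖a.sum fun i c => (ε i * c) • x i‖
      ≤ ‖linearCombination ℝ x a‖ + 2 * ‖∑ i ∈ a.support with ε i = -1, a i • x i‖ := by
        rw [hflip]
        refine (norm_sub_le _ _).trans_eq ?_
        rw [norm_smul, Real.norm_two]
    _ ≤ ‖linearCombination ℝ x a‖ + 2 * (C * ‖linearCombination ℝ x a‖) := by
        gcongr
        exact h.norm_sum_filter_le a _
    _ = (1 + 2 * C) * ‖linearCombination ℝ x a‖ := by ring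

end Greedy

theorem stmt_8_general {X : Type*} [NormedAddCommGroup X] [NormedSpace ℝ X]
    (x : ℕ → X)
    (C : ℝ)
    (hgreedy : ∀ (a : ℕ →₀ ℝ) (A : Finset ℕ),
      (∀ i ∈ A, ∀ j ∉ A, |a j| ≤ |a i|) →
      ∀ B : Finset ℕ, B.card = A.card → ∀ b : ℕ → ℝ,
        ‖(a.sum fun i c => c • x i) - ∑ i ∈ A, a i • x i‖
          ≤ C * ‖(a.sum fun i c => c • x i) - ∑ i ∈ B, b i • x i‖) :
    ∃ K : ℝ, ∀ (a : ℕ →₀ ℝ) (ε : ℕ → ℝ), (∀ i, ε i = 1 ∨ ε i = -1) →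
      ‖a.sum fun i c => (ε i * c) • x i‖ ≤ K * ‖a.sum fun i c => c • x i‖ := by
  have h : IsGreedyWith x C := by
    simpa only [IsGreedyWith, linearCombination_apply] using hgreedy
  exact ⟨1 + 2 * C, fun a ε hε => by
    simpa only [linearCombination_apply] using h.norm_sum_sign_smul_le a hε⟩

/-- A greedy basis is unconditional: if `{x_i}` is a basis of a Banach space `X`
(here: a sequence with dense span, with vectors `Σ aᵢ xᵢ` encoded by finitely supported
coefficient sequences) such that for some `C`, for every `x = Σ aᵢ xᵢ`, every set `A`
whose coefficients dominate all the others, and every set `B` with `|B| = |A|` and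
scalars `b`, `‖x − Σ_{i∈A} aᵢ xᵢ‖ ≤ C ‖x − Σ_{i∈B} bᵢ xᵢ‖`, then `{x_i}` is
unconditional: there is `K` with `‖Σ εᵢ aᵢ xᵢ‖ ≤ K ‖Σ aᵢ xᵢ‖` for all signs `εᵢ = ±1`. -/
theorem stmt_8 {X : Type*} [NormedAddCommGroup X] [NormedSpace ℝ X] [CompleteSpace X]
    (x : ℕ → X)
    (hspan : Dense (Submodule.span ℝ (Set.range x) : Set X))
    (C : ℝ)
    (hgreedy : ∀ (a : ℕ →₀ ℝ) (A : Finset ℕ),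
      (∀ i ∈ A, ∀ j ∉ A, |a j| ≤ |a i|) →
      ∀ B : Finset ℕ, B.card = A.card → ∀ b : ℕ → ℝ,
        ‖(a.sum fun i c => c • x i) - ∑ i ∈ A, a i • x i‖
          ≤ C * ‖(a.sum fun i c => c • x i) - ∑ i ∈ B, b i • x i‖) :
    ∃ K : ℝ, ∀ (a : ℕ →₀ ℝ) (ε : ℕ → ℝ), (∀ i, ε i = 1 ∨ ε i = -1) →
      ‖a.sum fun i c => (ε i * c) • x i‖ ≤ K * ‖a.sum fun i c => c • x i‖ :=
  stmt_8_general x C hgreedy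
end

section
/- Konyagin–Temlyakov criterion (sufficiency): if a normalized Schauder basis {x_i} of a Banach space X is unconditional (with constant K) and democratic (with constant D), then it is greedy: there exists C = C(K,D) such that for all x = Σ a_i x_i, all n, and all n-element sets A with min_{i∈A}|a_i| ≥ max_{i∉A}|a_i|, ‖x − Σ_{i∈A} a_i x_i‖ ≤ C inf{‖x − Σ_{i∈B} b_i x_i‖ : |B| = n, b_i ∈ ℝ}. -/
/-!
Write `y = ∑_{i ∈ B} bᵢ xᵢ`. The tail `x - ∑_{i ∈ A} aᵢ xᵢ` splits into the coordinates outside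
`A ∪ B`, where `x` and `x - y` agree, so unconditionality bounds that part by `K ‖x - y‖`, and the
coordinates in `B \ A`. Since `|B \ A| = |A \ B|` and every coefficient on `A \ B` dominates every
coefficient on `B \ A`, unconditionality and democracy compare the `B \ A` part with the flat
vector `∑_{A \ B} xᵢ` and then with the `A \ B` part of `x`, at cost `K² D`; that part is again a
coordinate projection of `x - y`. Hence `C = K + K³ D`.

Unconditionality is used in the form `|cᵢ| ≤ 1 ⇒ ‖∑ cᵢ dᵢ xᵢ‖ ≤ K ‖∑ dᵢ xᵢ‖`, which follows from
the sign form because the norm is convex and the cube `[-1, 1]ⁿ` is the convex hull of its vertices.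
-/

open Finset

section

variable {ι X : Type*} [NormedAddCommGroup X] [NormedSpace ℝ X]

lemma exists_sign_norm_add_smul_le (w y : X) {t : ℝ} (ht : |t| ≤ 1) :
    ∃ e : ℝ, (e = 1 ∨ e = -1) ∧ ‖w + t • y‖ ≤ ‖w + e • y‖ := by
  obtain ⟨ht₁, ht₂⟩ := abs_le.mp ht
  have hseg : w + t • y ∈ segment ℝ (w + (-1 : ℝ) • y) (w + (1 : ℝ) • y) :=
    ⟨(1 - t) / 2, (1 + t) / 2, by linarith, by linarith, by ring, by module⟩
  have hmax := convexOn_univ_norm.le_max_of_mem_segment (Set.mem_univ _) (Set.mem_univ _) hseg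
  rcases le_total ‖w + (-1 : ℝ) • y‖ ‖w + (1 : ℝ) • y‖ with h | h
  · exact ⟨1, .inl rfl, hmax.trans (max_le h le_rfl)⟩
  · exact ⟨-1, .inr rfl, hmax.trans (max_le le_rfl h)⟩

lemma exists_signs_norm_add_sum_smul_le (f : ι → X) (s : Finset ι) (v : X)
    {c : ι → ℝ} (hc : ∀ i ∈ s, |c i| ≤ 1) :
    ∃ ε : ι → ℝ, (∀ i, ε i = 1 ∨ ε i = -1) ∧
      ‖v + ∑ i ∈ s, c i • f i‖ ≤ ‖v + ∑ i ∈ s, ε i • f i‖ := by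
  classical
  induction s using Finset.induction_on generalizing v with
  | empty => exact ⟨fun _ => 1, fun _ => .inl rfl, by simp⟩
  | @insert j s hj ih =>
    obtain ⟨ε, hε, hle⟩ := ih (v + c j • f j) fun i hi => hc i (mem_insert_of_mem hi)
    obtain ⟨e, he, hle'⟩ :=
      exists_sign_norm_add_smul_le (v + ∑ i ∈ s, ε i • f i) (f j) (hc j (mem_insert_self j s))
    refine ⟨Function.update ε j e, fun i => ?_, ?_⟩
    · rcases eq_or_ne i j with rfl | hij
      · simpa using he
      · simpa [hij] using hε i
    · have hupd : ∑ i ∈ s, Function.update ε j e i • f i = ∑ i ∈ s, ε i • f i :=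
        sum_congr rfl fun i hi => by rw [Function.update_of_ne (ne_of_mem_of_not_mem hi hj)]
      calc ‖v + ∑ i ∈ insert j s, c i • f i‖
          = ‖v + c j • f j + ∑ i ∈ s, c i • f i‖ := by rw [sum_insert hj, add_assoc]
        _ ≤ ‖v + c j • f j + ∑ i ∈ s, ε i • f i‖ := hle
        _ = ‖v + ∑ i ∈ s, ε i • f i + c j • f j‖ := by rw [add_right_comm]
        _ ≤ ‖v + ∑ i ∈ s, ε i • f i + e • f j‖ := hle'
        _ = ‖v + ∑ i ∈ insert j s, Function.update ε j e i • f i‖ := by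
          rw [sum_insert hj, hupd, Function.update_self, add_right_comm, add_assoc]

def IsUnconditional (x : ι → X) (K : ℝ) : Prop :=
  ∀ (s : Finset ι) (c ε : ι → ℝ), (∀ i, ε i = 1 ∨ ε i = -1) →
    ‖∑ i ∈ s, (ε i * c i) • x i‖ ≤ K * ‖∑ i ∈ s, c i • x i‖

def IsDemocratic (x : ι → X) (D : ℝ) : Prop :=
  ∀ A B : Finset ι, A.card = B.card → ‖∑ i ∈ A, x i‖ ≤ D * ‖∑ i ∈ B, x i‖

namespace IsUnconditional

variable {x : ι → X} {K : ℝ}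

lemma of_finsupp
    (h : ∀ (a : ι →₀ ℝ) (ε : ι → ℝ), (∀ i, ε i = 1 ∨ ε i = -1) →
      ‖a.sum fun i c => (ε i * c) • x i‖ ≤ K * ‖a.sum fun i c => c • x i‖) :
    IsUnconditional x K := by
  intro s c ε hε
  have hsum (g : ι → ℝ → X) (hg : ∀ i, g i 0 = 0) :
      ((Finsupp.indicator s fun i _ => c i).sum g) = ∑ i ∈ s, g i (c i) := by
    rw [Finsupp.sum_of_support_subset _ (Finsupp.support_indicator_subset _ _) _ fun i _ => hg i]
    exact sum_congr rfl fun i hi => by rw [Finsupp.indicator_of_mem hi]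
  have h' := h (Finsupp.indicator s fun i _ => c i) ε hε
  rwa [hsum _ fun _ => by simp, hsum _ fun _ => by simp] at h'

lemma norm_sum_mul_smul_le (hx : IsUnconditional x K) {s : Finset ι}
    {c : ι → ℝ} (hc : ∀ i ∈ s, |c i| ≤ 1) (d : ι → ℝ) :
    ‖∑ i ∈ s, (c i * d i) • x i‖ ≤ K * ‖∑ i ∈ s, d i • x i‖ := by
  obtain ⟨ε, hε, hle⟩ := exists_signs_norm_add_sum_smul_le (fun i => d i • x i) s 0 hc
  simp only [zero_add, smul_smul] at hle
  exact hle.trans (hx s d ε hε)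

lemma norm_sum_subset_le (hx : IsUnconditional x K) {s t : Finset ι} (hts : t ⊆ s)
    (c : ι → ℝ) : ‖∑ i ∈ t, c i • x i‖ ≤ K * ‖∑ i ∈ s, c i • x i‖ := by
  classical
  have h := hx.norm_sum_mul_smul_le (s := s) (c := fun i => if i ∈ t then 1 else 0)
    (fun i _ => by split_ifs <;> simp) c
  simpa [ite_smul, sum_ite_mem, inter_eq_right.mpr hts] using h

lemma norm_sum_smul_le_of_abs_le (hx : IsUnconditional x K) {s : Finset ι}
    {a : ι → ℝ} {β : ℝ} (hβ : 0 ≤ β) (ha : ∀ i ∈ s, |a i| ≤ β) :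
    ‖∑ i ∈ s, a i • x i‖ ≤ K * (β * ‖∑ i ∈ s, x i‖) := by
  have h := hx.norm_sum_mul_smul_le (c := fun i => a i / β)
    (fun i hi => by rw [abs_div, abs_of_nonneg hβ]; exact div_le_one_of_le₀ (ha i hi) hβ)
    fun _ => β
  have hcancel : ∀ i ∈ s, a i / β * β = a i := fun i hi => by
    rcases hβ.eq_or_lt with rfl | hβ'
    · simp [abs_nonpos_iff.mp (ha i hi)]
    · exact div_mul_cancel₀ _ hβ'.ne'
  rwa [sum_congr rfl fun i hi => by rw [hcancel i hi], ← smul_sum, norm_smul,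
    Real.norm_of_nonneg hβ] at h

lemma mul_norm_sum_le_of_le_abs (hx : IsUnconditional x K) {s : Finset ι}
    {a : ι → ℝ} {β : ℝ} (hβ : 0 ≤ β) (ha : ∀ i ∈ s, β ≤ |a i|) :
    β * ‖∑ i ∈ s, x i‖ ≤ K * ‖∑ i ∈ s, a i • x i‖ := by
  have h := hx.norm_sum_mul_smul_le (c := fun i => β / a i)
    (fun i hi => by rw [abs_div, abs_of_nonneg hβ]; exact div_le_one_of_le₀ (ha i hi) (abs_nonneg _))
    a
  have hcancel : ∀ i ∈ s, β / a i * a i = β := fun i hi => by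
    rcases eq_or_ne (a i) 0 with h0 | h0
    · have hβ0 : β = 0 := le_antisymm (by simpa [h0] using ha i hi) hβ
      simp [hβ0]
    · exact div_mul_cancel₀ _ h0
  rwa [sum_congr rfl fun i hi => by rw [hcancel i hi], ← smul_sum, norm_smul,
    Real.norm_of_nonneg hβ] at h

lemma norm_sum_le_of_card_eq (hx : IsUnconditional x K) {D : ℝ}
    (hdem : IsDemocratic x D) (hK : 0 ≤ K) (hD : 0 ≤ D) {P Q : Finset ι} (hPQ : P.card = Q.card)
    {a : ι → ℝ} (hdom : ∀ i ∈ Q, ∀ j ∈ P, |a j| ≤ |a i|) :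
    ‖∑ i ∈ P, a i • x i‖ ≤ K ^ 2 * D * ‖∑ i ∈ Q, a i • x i‖ := by
  rcases Q.eq_empty_or_nonempty with rfl | hQ
  · simp [card_eq_zero.mp hPQ]
  obtain ⟨i₀, hi₀, hmin⟩ := Q.exists_min_image (fun i => |a i|) hQ
  calc ‖∑ i ∈ P, a i • x i‖
      ≤ K * (|a i₀| * ‖∑ i ∈ P, x i‖) :=
        hx.norm_sum_smul_le_of_abs_le (abs_nonneg _) fun j hj => hdom i₀ hi₀ j hj
    _ ≤ K * (|a i₀| * (D * ‖∑ i ∈ Q, x i‖)) := by gcongr; exact hdem P Q hPQ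
    _ = K * D * (|a i₀| * ‖∑ i ∈ Q, x i‖) := by ring
    _ ≤ K * D * (K * ‖∑ i ∈ Q, a i • x i‖) :=
        mul_le_mul_of_nonneg_left (hx.mul_norm_sum_le_of_le_abs (abs_nonneg _) hmin)
          (mul_nonneg hK hD)
    _ = K ^ 2 * D * ‖∑ i ∈ Q, a i • x i‖ := by ring

lemma norm_sum_le_of_disjoint (hx : IsUnconditional x K) {s T B : Finset ι}
    (hT : T ⊆ s) (hB : B ⊆ s) (hTB : Disjoint T B) (a b : ι → ℝ) :
    ‖∑ i ∈ T, a i • x i‖ ≤ K * ‖∑ i ∈ s, a i • x i - ∑ i ∈ B, b i • x i‖ := by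
  classical
  set c : ι → ℝ := fun i => a i - if i ∈ B then b i else 0
  have hs : ∑ i ∈ s, a i • x i - ∑ i ∈ B, b i • x i = ∑ i ∈ s, c i • x i := by
    simp only [c, sub_smul, sum_sub_distrib, ite_smul, zero_smul, sum_ite_mem,
      inter_eq_right.mpr hB]
  have hT' : ∑ i ∈ T, a i • x i = ∑ i ∈ T, c i • x i :=
    sum_congr rfl fun i hi => by simp [c, disjoint_left.mp hTB hi]
  rw [hs, hT']
  exact hx.norm_sum_subset_le hT c

lemma norm_sub_sum_le_of_greedy (hx : IsUnconditional x K) {D : ℝ}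
    (hdem : IsDemocratic x D) (hK : 0 ≤ K) (hD : 0 ≤ D) {s A B : Finset ι}
    (hA : A ⊆ s) (hB : B ⊆ s) (hcard : B.card = A.card) {a : ι → ℝ}
    (hgreedy : ∀ i ∈ A, ∀ j ∉ A, |a j| ≤ |a i|) (b : ι → ℝ) :
    ‖∑ i ∈ s, a i • x i - ∑ i ∈ A, a i • x i‖
      ≤ (K + K ^ 3 * D) * ‖∑ i ∈ s, a i • x i - ∑ i ∈ B, b i • x i‖ := by
  classical
  set z := ∑ i ∈ s, a i • x i - ∑ i ∈ B, b i • x i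
  have hsplit : ∑ i ∈ s, a i • x i - ∑ i ∈ A, a i • x i
      = ∑ i ∈ B \ A, a i • x i + ∑ i ∈ (s \ A) \ B, a i • x i := by
    rw [← sum_sdiff hA, add_sub_cancel_right, ← sum_inter_add_sum_sdiff (s \ A) B,
      sdiff_inter_right_comm, inter_eq_right.mpr hB]
  have hBA : ‖∑ i ∈ B \ A, a i • x i‖ ≤ K ^ 3 * D * ‖z‖ :=
    calc ‖∑ i ∈ B \ A, a i • x i‖
        ≤ K ^ 2 * D * ‖∑ i ∈ A \ B, a i • x i‖ :=
          hx.norm_sum_le_of_card_eq hdem hK hD (card_sdiff_comm hcard) fun i hi j hj =>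
            hgreedy i (mem_sdiff.mp hi).1 j (mem_sdiff.mp hj).2
      _ ≤ K ^ 2 * D * (K * ‖z‖) := by
          gcongr
          exact hx.norm_sum_le_of_disjoint (sdiff_subset.trans hA) hB sdiff_disjoint a b
      _ = K ^ 3 * D * ‖z‖ := by ring
  have hrest : ‖∑ i ∈ (s \ A) \ B, a i • x i‖ ≤ K * ‖z‖ :=
    hx.norm_sum_le_of_disjoint (sdiff_subset.trans sdiff_subset) hB sdiff_disjoint a b
  calc ‖∑ i ∈ s, a i • x i - ∑ i ∈ A, a i • x i‖
      ≤ ‖∑ i ∈ B \ A, a i • x i‖ + ‖∑ i ∈ (s \ A) \ B, a i • x i‖ := hsplit ▸ norm_add_le _ _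
    _ ≤ K ^ 3 * D * ‖z‖ + K * ‖z‖ := add_le_add hBA hrest
    _ = (K + K ^ 3 * D) * ‖z‖ := by ring

end IsUnconditional

end

theorem stmt_10_general {X : Type*} [NormedAddCommGroup X] [NormedSpace ℝ X]
    (x : ℕ → X) (hnorm : ∀ i, ‖x i‖ = 1)
    (K D : ℝ)
    (huncond : ∀ (a : ℕ →₀ ℝ) (ε : ℕ → ℝ), (∀ i, ε i = 1 ∨ ε i = -1) →
      ‖a.sum fun i c => (ε i * c) • x i‖ ≤ K * ‖a.sum fun i c => c • x i‖)
    (hdem : ∀ A B : Finset ℕ, A.card = B.card →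
      ‖∑ i ∈ A, x i‖ ≤ D * ‖∑ i ∈ B, x i‖) :
    ∃ C : ℝ, ∀ (a : ℕ →₀ ℝ) (A : Finset ℕ),
      (∀ i ∈ A, ∀ j ∉ A, |a j| ≤ |a i|) →
      ∀ B : Finset ℕ, B.card = A.card → ∀ b : ℕ → ℝ,
        ‖(a.sum fun i c => c • x i) - ∑ i ∈ A, a i • x i‖
          ≤ C * ‖(a.sum fun i c => c • x i) - ∑ i ∈ B, b i • x i‖ := by
  have hx : IsUnconditional x K := .of_finsupp huncond
  have hK : 0 ≤ K := zero_le_one.trans <| by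
    simpa [hnorm] using hx {0} (fun _ => 1) (fun _ => 1) fun _ => .inl rfl
  have hD : 0 ≤ D := zero_le_one.trans <| by simpa [hnorm] using hdem {0} {0} rfl
  refine ⟨K + K ^ 3 * D, fun a A hgreedy B hcard b => ?_⟩
  have hsum : (a.sum fun i c => c • x i) = ∑ i ∈ a.support ∪ A ∪ B, a i • x i :=
    Finsupp.sum_of_support_subset a (subset_union_left.trans subset_union_left) _
      fun _ _ => zero_smul ℝ _
  rw [hsum]
  exact hx.norm_sub_sum_le_of_greedy hdem hK hD (subset_union_right.trans subset_union_left)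
    subset_union_right hcard hgreedy b

/-- Konyagin–Temlyakov criterion (sufficiency): if a normalized basis `{x_i}` of a
Banach space `X` (vectors `Σ aᵢ xᵢ` encoded by finitely supported coefficient
sequences) is unconditional with constant `K` and democratic with constant `D`, then
it is greedy: there exists `C = C(K,D)` such that for every `x = Σ aᵢ xᵢ`, every set
`A` whose coefficients dominate all the others, and every `B` with `|B| = |A|` and
scalars `b`, `‖x − Σ_{i∈A} aᵢ xᵢ‖ ≤ C ‖x − Σ_{i∈B} bᵢ xᵢ‖`. -/
theorem stmt_10 {X : Type*} [NormedAddCommGroup X] [NormedSpace ℝ X] [CompleteSpace X]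
    (x : ℕ → X) (hnorm : ∀ i, ‖x i‖ = 1)
    (hspan : Dense (Submodule.span ℝ (Set.range x) : Set X))
    (K D : ℝ)
    (huncond : ∀ (a : ℕ →₀ ℝ) (ε : ℕ → ℝ), (∀ i, ε i = 1 ∨ ε i = -1) →
      ‖a.sum fun i c => (ε i * c) • x i‖ ≤ K * ‖a.sum fun i c => c • x i‖)
    (hdem : ∀ A B : Finset ℕ, A.card = B.card →
      ‖∑ i ∈ A, x i‖ ≤ D * ‖∑ i ∈ B, x i‖) :
    ∃ C : ℝ, ∀ (a : ℕ →₀ ℝ) (A : Finset ℕ),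
      (∀ i ∈ A, ∀ j ∉ A, |a j| ≤ |a i|) →
      ∀ B : Finset ℕ, B.card = A.card → ∀ b : ℕ → ℝ,
        ‖(a.sum fun i c => c • x i) - ∑ i ∈ A, a i • x i‖
          ≤ C * ‖(a.sum fun i c => c • x i) - ∑ i ∈ B, b i • x i‖ :=
  stmt_10_general x hnorm K D huncond hdem
end

section
/- Every bounded linear operator from ℓ_p, with 2 < p < ∞, to ℓ_2 is compact. -/
/-!
Let `Pₙ` be the truncation of `ℓ_p` to the first `n` coordinates. If `T ∘ Pₙ` did not converge
to `T` in norm, there would be disjointly supported vectors `u₀, u₁, …` in the unit ball of `ℓ_p`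
with `‖T uₖ‖ > δ > 0`. Choosing signs greedily, so that each new term makes a nonnegative inner
product with the previous partial sum, gives `N δ² ≤ ‖T (∑ₖ ±uₖ)‖²`, while disjointness of the
supports gives `‖∑ₖ ±uₖ‖ ≤ N ^ (1 / p)`. Hence `N δ² ≤ ‖T‖² N ^ (2 / p)`, which fails for large `N`
when `p > 2`. So `T` is a norm limit of the finite-rank operators `T ∘ Pₙ`.
-/

open scoped ENNReal
open Filter Topology Finset

theorem exists_signs_sum_sq_norm_le {ι H : Type*} [NormedAddCommGroup H] [InnerProductSpace ℝ H]
    (s : Finset ι) (v : ι → H) :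
    ∃ σ : ι → ℝ, (∀ k, |σ k| = 1) ∧ ∑ k ∈ s, ‖v k‖ ^ 2 ≤ ‖∑ k ∈ s, σ k • v k‖ ^ 2 := by
  classical
  induction s using Finset.induction_on with
  | empty => exact ⟨fun _ => 1, fun _ => abs_one, by simp⟩
  | insert a s ha ih =>
    obtain ⟨σ, hσ, hle⟩ := ih
    set w := ∑ k ∈ s, σ k • v k
    set ε : ℝ := if 0 ≤ inner ℝ (v a) w then 1 else -1
    have hε : |ε| = 1 := by unfold ε; split_ifs <;> simp
    have hεinner : 0 ≤ ε * inner ℝ (v a) w := by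
      unfold ε; split_ifs with h
      · simpa using h
      · linarith
    have hrest : ∑ k ∈ s, Function.update σ a ε k • v k = w :=
      sum_congr rfl fun k hk => by rw [Function.update_of_ne (ne_of_mem_of_not_mem hk ha)]
    refine ⟨Function.update σ a ε, fun k => ?_, ?_⟩
    · rcases eq_or_ne k a with rfl | hk
      · simpa using hε
      · simpa [Function.update_of_ne hk] using hσ k
    · rw [sum_insert ha, sum_insert ha, hrest, Function.update_self, norm_add_sq_real,
        norm_smul, real_inner_smul_left, Real.norm_eq_abs, hε, one_mul]
      linarith

theorem abs_sum_rpow_le_sum_abs_rpow {ι : Type*} {s : Finset ι} {a : ι → ℝ} {r : ℝ} (hr : 0 < r)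
    (ha : (s : Set ι).Pairwise fun k l => a k = 0 ∨ a l = 0) :
    |∑ k ∈ s, a k| ^ r ≤ ∑ k ∈ s, |a k| ^ r := by
  have hnonneg : ∀ k ∈ s, 0 ≤ |a k| ^ r := fun k _ => by positivity
  by_cases hzero : ∀ k ∈ s, a k = 0
  · rw [sum_eq_zero hzero, abs_zero, Real.zero_rpow hr.ne']
    exact sum_nonneg hnonneg
  push Not at hzero
  obtain ⟨k, hk, hak⟩ := hzero
  have hsingle : ∑ l ∈ s, a l = a k :=
    sum_eq_single_of_mem k hk fun l hl hlk => (ha hl hk hlk).resolve_right hak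
  rw [hsingle]
  exact single_le_sum hnonneg hk

theorem nonpos_of_forall_natCast_mul_le_rpow {c C r : ℝ} (hr : r < 1)
    (h : ∀ N : ℕ, N * c ≤ C * (N : ℝ) ^ r) : c ≤ 0 := by
  by_contra! hc
  have hgrowth : Tendsto (fun N : ℕ => (N : ℝ) ^ (1 - r)) atTop atTop :=
    (tendsto_rpow_atTop (by linarith)).comp tendsto_natCast_atTop_atTop
  obtain ⟨N, hN, hN1⟩ := ((hgrowth.eventually_gt_atTop (C / c)).and (eventually_ge_atTop 1)).exists
  have hNpos : (0 : ℝ) < N := by exact_mod_cast hN1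
  have hlt : C * (N : ℝ) ^ r < N * c := calc
    C * (N : ℝ) ^ r < (N ^ (1 - r) * c) * N ^ r :=
      mul_lt_mul_of_pos_right ((div_lt_iff₀ hc).1 hN) (Real.rpow_pos_of_pos hNpos r)
    _ = N * c := by rw [mul_right_comm, ← Real.rpow_add hNpos, sub_add_cancel, Real.rpow_one]
  exact (h N).not_gt hlt

namespace lp

variable {α ι : Type*} {p : ℝ≥0∞} [Fact (1 ≤ p)]

theorem norm_sum_smul_le_of_pairwise_disjoint (hp : 0 < p.toReal)
    {u : ι → lp (fun _ : α => ℝ) p} (hu : Pairwise fun k l => ∀ j, u k j = 0 ∨ u l j = 0)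
    (hu1 : ∀ k, ‖u k‖ ≤ 1) {σ : ι → ℝ} (hσ : ∀ k, |σ k| ≤ 1) (s : Finset ι) :
    ‖∑ k ∈ s, σ k • u k‖ ≤ (#s : ℝ) ^ p.toReal⁻¹ := by
  refine norm_le_of_forall_sum_le hp (by positivity) fun t => ?_
  rw [← Real.rpow_mul (by positivity), inv_mul_cancel₀ hp.ne', Real.rpow_one]
  have hcoord : ∀ j, ‖(∑ k ∈ s, σ k • u k) j‖ ^ p.toReal ≤ ∑ k ∈ s, ‖u k j‖ ^ p.toReal := by
    intro j
    simp only [coeFn_sum, coeFn_smul, Finset.sum_apply, Pi.smul_apply, smul_eq_mul,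
      Real.norm_eq_abs]
    refine (abs_sum_rpow_le_sum_abs_rpow hp fun k _ l _ hkl => ?_).trans
      (sum_le_sum fun k _ => ?_)
    · rcases hu hkl j with h | h <;> simp [h]
    · rw [abs_mul]
      gcongr
      exact mul_le_of_le_one_left (abs_nonneg _) (hσ k)
  calc ∑ j ∈ t, ‖(∑ k ∈ s, σ k • u k) j‖ ^ p.toReal
      ≤ ∑ j ∈ t, ∑ k ∈ s, ‖u k j‖ ^ p.toReal := sum_le_sum fun j _ => hcoord j
    _ = ∑ k ∈ s, ∑ j ∈ t, ‖u k j‖ ^ p.toReal := sum_comm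
    _ ≤ ∑ k ∈ s, 1 := sum_le_sum fun k _ =>
        (sum_rpow_le_norm_rpow hp (u k) t).trans
          (Real.rpow_le_one (norm_nonneg _) (hu1 k) hp.le)
    _ = #s := by simp

variable (p) in
noncomputable def truncate (n : ℕ) : lp (fun _ : ℕ => ℝ) p →L[ℝ] lp (fun _ : ℕ => ℝ) p :=
  ∑ i ∈ range n, (singleContinuousLinearMap ℝ _ p i).comp (evalCLM ℝ (fun _ : ℕ => ℝ) p i)

theorem truncate_apply (n : ℕ) (x : lp (fun _ : ℕ => ℝ) p) :
    truncate p n x = ∑ i ∈ range n, lp.single p i (x i) := by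
  simp [truncate, evalCLM]

theorem coeFn_truncate (n : ℕ) (x : lp (fun _ : ℕ => ℝ) p) (j : ℕ) :
    truncate p n x j = if j < n then x j else 0 := by
  rw [truncate_apply, coeFn_sum, Finset.sum_apply]
  simp [lp.single_apply]

theorem isCompactOperator_truncate (n : ℕ) : IsCompactOperator (truncate p n) := by
  refine Submodule.sum_mem (compactOperator _ _ _) fun i _ => ?_
  exact (isCompactOperator_of_locallyCompactSpace_rng
    (singleContinuousLinearMap ℝ (fun _ : ℕ => ℝ) p i)).comp_clm (evalCLM ℝ (fun _ : ℕ => ℝ) p i)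

theorem tendsto_truncate (hp : p ≠ ⊤) (x : lp (fun _ : ℕ => ℝ) p) :
    Tendsto (fun n => truncate p n x) atTop (𝓝 x) := by
  simpa only [truncate_apply] using (lp.hasSum_single hp x).tendsto_sum_nat

theorem norm_truncate_le (n : ℕ) (x : lp (fun _ : ℕ => ℝ) p) : ‖truncate p n x‖ ≤ ‖x‖ :=
  norm_mono (zero_lt_one.trans_le Fact.out).ne' fun j => by
    rw [coeFn_truncate]; split_ifs <;> simp

theorem norm_sub_truncate_le (n : ℕ) (x : lp (fun _ : ℕ => ℝ) p) :
    ‖x - truncate p n x‖ ≤ ‖x‖ :=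
  norm_mono (zero_lt_one.trans_le Fact.out).ne' fun j => by
    rw [coeFn_sub, Pi.sub_apply, coeFn_truncate]; split_ifs <;> simp

section Blocks

variable {F : Type*} [NormedAddCommGroup F] [NormedSpace ℝ F]

theorem exists_tail_of_not_tendsto_comp_truncate {T : lp (fun _ : ℕ => ℝ) p →L[ℝ] F}
    (hT : ¬ Tendsto (fun n => T.comp (truncate p n)) atTop (𝓝 T)) :
    ∃ δ > 0, ∀ n, ∃ x : lp (fun _ : ℕ => ℝ) p, ‖x‖ ≤ 1 ∧ (∀ j < n, x j = 0) ∧ δ < ‖T x‖ := by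
  rw [tendsto_iff_norm_sub_tendsto_zero, Metric.tendsto_atTop] at hT
  push Not at hT
  obtain ⟨ε, hε, hfreq⟩ := hT
  refine ⟨ε / 2, by positivity, fun n => ?_⟩
  obtain ⟨m, hnm, hm⟩ := hfreq n
  rw [Real.dist_eq, sub_zero, abs_norm, norm_sub_rev] at hm
  obtain ⟨x, hx, hTx⟩ := (T - T.comp (truncate p m)).exists_lt_apply_of_lt_opNorm
    (show ε / 2 < _ by linarith)
  refine ⟨x - truncate p m x, (norm_sub_truncate_le m x).trans hx.le, fun j hj => ?_, ?_⟩
  · rw [coeFn_sub, Pi.sub_apply, coeFn_truncate, if_pos (by omega), sub_self]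
  · simpa [map_sub] using hTx

theorem exists_block {T : lp (fun _ : ℕ => ℝ) p →L[ℝ] F} (hp : p ≠ ⊤) {δ : ℝ} {n : ℕ}
    {x : lp (fun _ : ℕ => ℝ) p} (hx : ‖x‖ ≤ 1) (hxn : ∀ j < n, x j = 0) (hTx : δ < ‖T x‖) :
    ∃ m, n < m ∧ ∃ y : lp (fun _ : ℕ => ℝ) p,
      ‖y‖ ≤ 1 ∧ δ < ‖T y‖ ∧ ∀ j ∉ Set.Ico n m, y j = 0 := by
  have hTtrunc : ∀ᶠ m in atTop, δ < ‖T (truncate p m x)‖ :=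
    ((T.continuous.tendsto x).comp (tendsto_truncate hp x)).norm.eventually (lt_mem_nhds hTx)
  obtain ⟨m, hnm, hm⟩ := ((eventually_gt_atTop n).and hTtrunc).exists
  refine ⟨m, hnm, truncate p m x, (norm_truncate_le m x).trans hx, hm, fun j hj => ?_⟩
  rw [coeFn_truncate]
  split_ifs with hjm
  · exact hxn j (by simp only [Set.mem_Ico, not_and, not_lt] at hj; omega)
  · rfl

theorem exists_pairwise_disjoint_of_forall_tail {T : lp (fun _ : ℕ => ℝ) p →L[ℝ] F} (hp : p ≠ ⊤)
    {δ : ℝ} (h : ∀ n, ∃ x : lp (fun _ : ℕ => ℝ) p, ‖x‖ ≤ 1 ∧ (∀ j < n, x j = 0) ∧ δ < ‖T x‖) :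
    ∃ u : ℕ → lp (fun _ : ℕ => ℝ) p, Pairwise (fun k l => ∀ j, u k j = 0 ∨ u l j = 0) ∧
      (∀ k, ‖u k‖ ≤ 1) ∧ ∀ k, δ < ‖T (u k)‖ := by
  choose m hm y hy hTy hysupp using fun n =>
    let ⟨_, hx, hxn, hTx⟩ := h n
    exists_block hp hx hxn hTx
  -- the `k`-th block lives on `[b k, b (k + 1))`
  set b : ℕ → ℕ := fun k => m^[k] 0
  have hb_succ : ∀ k, b (k + 1) = m (b k) := fun k => Function.iterate_succ_apply' m k 0
  have hb : StrictMono b := strictMono_nat_of_lt_succ fun k => hb_succ k ▸ hm _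
  have hdisj : ∀ ⦃k l⦄, k < l → ∀ j, y (b k) j = 0 ∨ y (b l) j = 0 := fun k l hkl j => by
    by_cases hj : j < b (k + 1)
    · exact Or.inr (hysupp _ j fun hj' => by
        have := hb.monotone (show k + 1 ≤ l from hkl); simp only [Set.mem_Ico] at hj'; omega)
    · exact Or.inl (hysupp _ j fun hj' => by
        rw [hb_succ] at hj; simp only [Set.mem_Ico] at hj'; omega)
  refine ⟨fun k => y (b k), fun k l hkl j => ?_, fun k => hy _, fun k => hTy _⟩
  rcases hkl.lt_or_gt with hkl | hlk
  · exact hdisj hkl j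
  · exact (hdisj hlk j).symm

end Blocks

theorem card_mul_sq_le_of_pairwise_disjoint {H : Type*} [NormedAddCommGroup H]
    [InnerProductSpace ℝ H] (hp : 0 < p.toReal) (T : lp (fun _ : α => ℝ) p →L[ℝ] H)
    {u : ι → lp (fun _ : α => ℝ) p} (hu : Pairwise fun k l => ∀ j, u k j = 0 ∨ u l j = 0)
    (hu1 : ∀ k, ‖u k‖ ≤ 1) {δ : ℝ} (hδ : 0 ≤ δ) (hTu : ∀ k, δ ≤ ‖T (u k)‖) (s : Finset ι) :
    #s * δ ^ 2 ≤ ‖T‖ ^ 2 * (#s : ℝ) ^ (2 / p.toReal) := by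
  obtain ⟨σ, hσ, hsigns⟩ := exists_signs_sum_sq_norm_le s fun k => T (u k)
  have hsum := norm_sum_smul_le_of_pairwise_disjoint hp hu hu1 (fun k => (hσ k).le) s
  calc #s * δ ^ 2 = ∑ _k ∈ s, δ ^ 2 := by simp
    _ ≤ ∑ k ∈ s, ‖T (u k)‖ ^ 2 := sum_le_sum fun k _ => pow_le_pow_left₀ hδ (hTu k) 2
    _ ≤ ‖T (∑ k ∈ s, σ k • u k)‖ ^ 2 := by simpa only [map_sum, map_smul] using hsigns
    _ ≤ (‖T‖ * (#s : ℝ) ^ p.toReal⁻¹) ^ 2 := by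
        gcongr
        exact (T.le_opNorm _).trans (by gcongr)
    _ = ‖T‖ ^ 2 * (#s : ℝ) ^ (2 / p.toReal) := by
        rw [mul_pow, ← Real.rpow_mul_natCast (by positivity)]
        ring_nf

theorem isCompactOperator_of_two_lt {H : Type*} [NormedAddCommGroup H] [InnerProductSpace ℝ H]
    [CompleteSpace H] (hp2 : 2 < p) (hp : p ≠ ⊤) (T : lp (fun _ : ℕ => ℝ) p →L[ℝ] H) :
    IsCompactOperator T := by
  have hp2' : 2 < p.toReal := by simpa using (ENNReal.toReal_lt_toReal (by simp) hp).2 hp2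
  suffices Tendsto (fun n => T.comp (truncate p n)) atTop (𝓝 T) from
    isCompactOperator_of_tendsto this (.of_forall fun n => (isCompactOperator_truncate n).clm_comp T)
  by_contra hT
  obtain ⟨δ, hδ, htail⟩ := exists_tail_of_not_tendsto_comp_truncate hT
  obtain ⟨u, hu, hu1, hTu⟩ := exists_pairwise_disjoint_of_forall_tail hp htail
  have hδsq : δ ^ 2 ≤ 0 := nonpos_of_forall_natCast_mul_le_rpow
    ((div_lt_one (by linarith)).2 hp2') fun N => by
      simpa using card_mul_sq_le_of_pairwise_disjoint (by linarith) T hu hu1 hδ.le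
        (fun k => (hTu k).le) (range N)
  exact (pow_pos hδ 2).not_ge hδsq

end lp

/-- Every bounded linear operator from `ℓ_p`, `2 < p < ∞`, to `ℓ_2` is compact. -/
theorem stmt_12 (p : ℝ≥0∞) [Fact (1 ≤ p)] (hp2 : 2 < p) (hp : p ≠ ⊤)
    (T : lp (fun _ : ℕ => ℝ) p →L[ℝ] lp (fun _ : ℕ => ℝ) 2) :
    IsCompactOperator T :=
  lp.isCompactOperator_of_two_lt hp2 hp T
end

section
/- Every bounded linear operator from c_0 to ℓ_2 is compact. -/
/-!
The truncations `P_M f = f · 1_{[0, M)}` have finite rank, so it suffices that `T ∘ P_M → T` in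
operator norm, i.e. that `T` is uniformly small on the unit vectors supported in `[m, ∞)` for
large `m`. Otherwise there are blocks `u_k` in the unit ball of `c₀` with consecutive disjoint
supports and `‖T u_k‖ ≥ ε`. Choosing signs `s_k` so that all cross terms `⟪T w, s_k T u_k⟫` are
nonnegative, `w = ∑_{k < K} s_k u_k` stays in the unit ball while `‖T w‖² ≥ K ε²`, which is
absurd once `K ε² > ‖T‖²`.
-/

open scoped ZeroAtInfty RealInnerProductSpace
open Filter Topology Function Set

section InnerProductSpace

variable {H : Type*} [NormedAddCommGroup H] [InnerProductSpace ℝ H]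

lemma exists_abs_eq_one_norm_sq_add_norm_sq_le (v w : H) :
    ∃ s : ℝ, |s| = 1 ∧ ‖v‖ ^ 2 + ‖w‖ ^ 2 ≤ ‖v + s • w‖ ^ 2 := by
  obtain ⟨s, hs, hvw⟩ : ∃ s : ℝ, |s| = 1 ∧ 0 ≤ s * ⟪v, w⟫ := by
    rcases le_total 0 ⟪v, w⟫ with h | h
    exacts [⟨1, by simp, by simpa⟩, ⟨-1, by simp, by simpa⟩]
  refine ⟨s, hs, ?_⟩
  rw [norm_add_sq_real, real_inner_smul_right, norm_smul, Real.norm_eq_abs, hs, one_mul]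
  linarith

end InnerProductSpace

noncomputable section

namespace ZeroAtInftyContinuousMap

section Norm

variable {α β : Type*} [TopologicalSpace α] [SeminormedAddCommGroup β]

lemma norm_apply_le (f : C₀(α, β)) (x : α) : ‖f x‖ ≤ ‖f‖ :=
  f.toBCF.norm_coe_le_norm x

lemma norm_le {f : C₀(α, β)} {C : ℝ} (hC : 0 ≤ C) : ‖f‖ ≤ C ↔ ∀ x, ‖f x‖ ≤ C :=
  BoundedContinuousFunction.norm_le (f := f.toBCF) hC

lemma norm_add_le_max_of_disjoint {f g : C₀(α, β)} (h : Disjoint (support f) (support g)) :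
    ‖f + g‖ ≤ max ‖f‖ ‖g‖ := by
  refine (norm_le (by positivity)).2 fun x => ?_
  by_cases hfx : f x = 0
  · simpa [hfx] using (norm_apply_le g x).trans (le_max_right _ _)
  · have hgx : g x = 0 := notMem_support.1 (Set.disjoint_left.1 h hfx)
    simpa [hgx] using (norm_apply_le f x).trans (le_max_left _ _)

end Norm

def extendByZero (M : ℕ) (v : Fin M → ℝ) : C₀(ℕ, ℝ) where
  toFun n := if h : n < M then v ⟨n, h⟩ else 0
  continuous_toFun := continuous_of_discreteTopology
  zero_at_infty' := by
    rw [cocompact_eq_atTop]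
    exact tendsto_nhds_of_eventually_eq <|
      (eventually_ge_atTop M).mono fun n hn => dif_neg hn.not_gt

@[simp]
lemma extendByZero_apply (M : ℕ) (v : Fin M → ℝ) (n : ℕ) :
    extendByZero M v n = if h : n < M then v ⟨n, h⟩ else 0 :=
  rfl

def extendByZeroCLM (M : ℕ) : (Fin M → ℝ) →L[ℝ] C₀(ℕ, ℝ) :=
  LinearMap.toContinuousLinearMap
    { toFun := extendByZero M
      map_add' v w := by ext n; by_cases h : n < M <;> simp [h]
      map_smul' c v := by ext n; by_cases h : n < M <;> simp [h] }

def restrictCLM (M : ℕ) : C₀(ℕ, ℝ) →L[ℝ] (Fin M → ℝ) :=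
  LinearMap.mkContinuous
    { toFun f i := f i
      map_add' _ _ := rfl
      map_smul' _ _ := rfl } 1
    fun f => by
      rw [one_mul]
      exact (pi_norm_le_iff_of_nonneg (norm_nonneg f)).2 fun i => norm_apply_le f i

/-- Truncation `f ↦ f · 1_{[0, M)}`, factored through `Fin M → ℝ` so that it is visibly of finite
rank. -/
def truncCLM (M : ℕ) : C₀(ℕ, ℝ) →L[ℝ] C₀(ℕ, ℝ) :=
  extendByZeroCLM M ∘L restrictCLM M

lemma truncCLM_apply (M : ℕ) (f : C₀(ℕ, ℝ)) (n : ℕ) :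
    truncCLM M f n = if n < M then f n else 0 := by
  by_cases h : n < M <;> simp [truncCLM, extendByZeroCLM, restrictCLM, h]

lemma isCompactOperator_truncCLM (M : ℕ) : IsCompactOperator (truncCLM M) :=
  (isCompactOperator_of_locallyCompactSpace_dom (restrictCLM M)).clm_comp (extendByZeroCLM M)

lemma norm_truncCLM_apply_le (M : ℕ) (f : C₀(ℕ, ℝ)) : ‖truncCLM M f‖ ≤ ‖f‖ :=
  (norm_le (norm_nonneg f)).2 fun n => by
    rw [truncCLM_apply]; split_ifs
    exacts [norm_apply_le f n, by simp]

lemma norm_sub_truncCLM_apply_le (M : ℕ) (f : C₀(ℕ, ℝ)) : ‖f - truncCLM M f‖ ≤ ‖f‖ :=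
  (norm_le (norm_nonneg f)).2 fun n => by
    rw [sub_apply, truncCLM_apply]; split_ifs
    exacts [by simp, by simpa using norm_apply_le f n]

lemma support_truncCLM_apply_subset (M : ℕ) (f : C₀(ℕ, ℝ)) :
    support (truncCLM M f) ⊆ support f ∩ Iio M := by
  intro n hn
  rw [mem_support, truncCLM_apply] at hn
  split_ifs at hn with h
  exacts [⟨hn, h⟩, absurd rfl hn]

lemma support_sub_truncCLM_apply_subset (M : ℕ) (f : C₀(ℕ, ℝ)) :
    support (f - truncCLM M f) ⊆ Ici M := by
  intro n hn
  rw [mem_support, sub_apply, truncCLM_apply] at hn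
  split_ifs at hn with h
  exacts [absurd (sub_self _) hn, not_lt.1 h]

lemma tendsto_truncCLM_apply (f : C₀(ℕ, ℝ)) :
    Tendsto (fun M => truncCLM M f) atTop (𝓝 f) := by
  refine Metric.tendsto_atTop.2 fun ε hε => ?_
  have hf : ∀ᶠ n in atTop, ‖f n‖ < ε / 2 := by
    simpa [cocompact_eq_atTop] using
      (zero_at_infty f).eventually (Metric.ball_mem_nhds 0 (half_pos hε))
  obtain ⟨N, hN⟩ := eventually_atTop.1 hf
  refine ⟨N, fun M hM => ?_⟩
  rw [dist_comm, dist_eq_norm]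
  refine ((norm_le (half_pos hε).le).2 fun n => ?_).trans_lt (half_lt_self hε)
  rw [sub_apply, truncCLM_apply]
  split_ifs with h
  · simpa using (half_pos hε).le
  · simpa using (hN n (hM.trans (not_lt.1 h))).le

section InnerProductSpace

variable {H : Type*} [NormedAddCommGroup H] [InnerProductSpace ℝ H] (T : C₀(ℕ, ℝ) →L[ℝ] H)

lemma exists_nat_mul_sq_le_norm_apply_sq {ε : ℝ} (hε : 0 ≤ ε)
    (hblock : ∀ m : ℕ, ∃ u : C₀(ℕ, ℝ), ∃ M, ‖u‖ ≤ 1 ∧ support u ⊆ Ico m M ∧ ε ≤ ‖T u‖)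
    (K : ℕ) : ∃ w : C₀(ℕ, ℝ), ∃ m, ‖w‖ ≤ 1 ∧ support w ⊆ Iio m ∧ K * ε ^ 2 ≤ ‖T w‖ ^ 2 := by
  induction K with
  | zero => exact ⟨0, 0, by simp, by simp, by simp⟩
  | succ K ih =>
    obtain ⟨w, m, hw, hwm, hTw⟩ := ih
    obtain ⟨u, M, hu, huM, hTu⟩ := hblock m
    obtain ⟨s, hs, hsq⟩ := exists_abs_eq_one_norm_sq_add_norm_sq_le (T w) (T u)
    have hsu : support (s • u) ⊆ Ico m M := (support_const_smul_subset s ⇑u).trans huM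
    refine ⟨w + s • u, max m M, ?_, ?_, ?_⟩
    · calc ‖w + s • u‖ ≤ max ‖w‖ ‖s • u‖ := norm_add_le_max_of_disjoint <|
            (Iio_disjoint_Ici le_rfl).mono hwm (hsu.trans Ico_subset_Ici_self)
        _ ≤ 1 := max_le hw (by rwa [norm_smul, Real.norm_eq_abs, hs, one_mul])
    · exact (support_add _ _).trans <| union_subset
        (hwm.trans (Iio_subset_Iio (le_max_left _ _)))
        (hsu.trans (Ico_subset_Iio_self.trans (Iio_subset_Iio (le_max_right _ _))))
    · push_cast
      rw [map_add, map_smul]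
      nlinarith

lemma exists_forall_norm_apply_lt_of_support_subset_Ico {ε : ℝ} (hε : 0 < ε) :
    ∃ m : ℕ, ∀ (u : C₀(ℕ, ℝ)) (M : ℕ), ‖u‖ ≤ 1 → support u ⊆ Ico m M → ‖T u‖ < ε := by
  by_contra! hblock
  obtain ⟨K, hK⟩ := exists_nat_gt (‖T‖ ^ 2 / ε ^ 2)
  obtain ⟨w, -, hw, -, hTw⟩ := exists_nat_mul_sq_le_norm_apply_sq T hε.le hblock K
  have hTw' : ‖T w‖ ≤ ‖T‖ := T.unit_le_opNorm w hw
  rw [div_lt_iff₀ (by positivity)] at hK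
  nlinarith [norm_nonneg (T w)]

theorem tendsto_comp_truncCLM : Tendsto (fun M : ℕ => T ∘L truncCLM M) atTop (𝓝 T) := by
  refine (Metric.tendsto_atTop (α := C₀(ℕ, ℝ) →L[ℝ] H)).2 fun ε hε => ?_
  obtain ⟨m, hm⟩ := exists_forall_norm_apply_lt_of_support_subset_Ico T (half_pos hε)
  refine ⟨m, fun M hM => ?_⟩
  suffices ∀ x : C₀(ℕ, ℝ), ‖x‖ = 1 → ‖T (x - truncCLM M x)‖ ≤ ε / 2 by
    calc dist (T ∘L truncCLM M) T = ‖T - T ∘L truncCLM M‖ := dist_eq_norm' (T ∘L truncCLM M) T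
      _ ≤ ε / 2 := ContinuousLinearMap.opNorm_le_of_unit_norm (half_pos hε).le
        fun x hx => by simpa using this x hx
      _ < ε := half_lt_self hε
  intro x hx
  set y := x - truncCLM M x
  have hy : support y ⊆ Ici m :=
    (support_sub_truncCLM_apply_subset M x).trans (Ici_subset_Ici.2 hM)
  have hTy : Tendsto (fun K => ‖T (truncCLM K y)‖) atTop (𝓝 ‖T y‖) :=
    ((T.continuous.tendsto y).comp (tendsto_truncCLM_apply y)).norm
  refine le_of_tendsto' hTy fun K => (hm _ K ?_ ?_).le
  · exact (norm_truncCLM_apply_le K y).trans ((norm_sub_truncCLM_apply_le M x).trans hx.le)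
  · exact (support_truncCLM_apply_subset K y).trans fun n hn => ⟨hy hn.1, hn.2⟩

theorem isCompactOperator_of_innerProductSpace [CompleteSpace H] : IsCompactOperator T :=
  isCompactOperator_of_tendsto (tendsto_comp_truncCLM T)
    (Eventually.of_forall fun M => (isCompactOperator_truncCLM M).clm_comp T)

end InnerProductSpace

end ZeroAtInftyContinuousMap

end

/-- Every bounded linear operator from `c₀` (real sequences vanishing at infinity, with
the supremum norm) to `ℓ_2` is compact. -/
theorem stmt_13 (T : C₀(ℕ, ℝ) →L[ℝ] lp (fun _ : ℕ => ℝ) 2) :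
    IsCompactOperator T :=
  ZeroAtInftyContinuousMap.isCompactOperator_of_innerProductSpace T
end

section
/- For every 1 ≤ p < ∞, ε > 0, and positive integers m, k, there exists N = N(p, m, k, ε) such that the ℓ_p^m-sum of m copies of ℓ_2^k embeds into ℓ_p^N with constant 1+ε (for p ≠ 2 with constant 2 suffices): there is a linear map T : (⊕_{j=1}^m ℓ_2^k)_{ℓ_p} → ℓ_p^N with ‖x‖ ≤ ‖Tx‖ ≤ (1+ε)‖x‖ for all x. -/
open scoped ENNReal NNReal
open MeasureTheory Metric RealInnerProductSpace

/-!
By rotation invariance, `x ↦ ⟪x, ·⟫` maps a finite-dimensional Euclidean space into `L^p` of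
Lebesgue measure on the unit ball, multiplying all norms by the same constant
`c = ‖⟪u, ·⟫‖_p` (`u` a unit vector). Replacing `θ` by a simple function `σ θ` that is
`L^p`-close to the identity perturbs this by at most `‖x‖ ‖id - σ‖_p`, and `θ ↦ ⟪x, σ θ⟫` is a step
function whose `L^p` norm is a weighted `ℓ_p` norm of the finitely many values `⟪x, v⟫`,
`v ∈ range σ`. After rescaling this is a `(1 + ε)`-embedding of `ℓ_2^k` into some `ℓ_p^N`, and
applying it in each coordinate embeds the `ℓ_p`-sum of `m` copies of `ℓ_2^k` into `ℓ_p^(mN)`.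
-/

namespace PiLp

section Map

variable {p : ℝ≥0∞} {ι : Type*} {β γ : ι → Type*}
  [∀ i, SeminormedAddCommGroup (β i)] [∀ i, NormedSpace ℝ (β i)]
  [∀ i, SeminormedAddCommGroup (γ i)] [∀ i, NormedSpace ℝ (γ i)]

variable (p) in
def piMapₗ (S : ∀ i, β i →ₗ[ℝ] γ i) : PiLp p β →ₗ[ℝ] PiLp p γ :=
  (WithLp.linearEquiv p ℝ _).symm.toLinearMap ∘ₗ LinearMap.piMap S ∘ₗ
    (WithLp.linearEquiv p ℝ _).toLinearMap

@[simp]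
theorem piMapₗ_apply (S : ∀ i, β i →ₗ[ℝ] γ i) (x : PiLp p β) (i : ι) :
    piMapₗ p S x i = S i (x i) := rfl

end Map

variable {p : ℝ≥0∞} [Fact (1 ≤ p)] {ι : Type*} [Fintype ι]

theorem norm_le_of_forall_norm_apply_le {β γ : ι → Type*} [∀ i, SeminormedAddCommGroup (β i)]
    [∀ i, SeminormedAddCommGroup (γ i)] {x : PiLp p β} {y : PiLp p γ}
    (h : ∀ i, ‖x i‖ ≤ ‖y i‖) : ‖x‖ ≤ ‖y‖ := by
  rcases p.dichotomy with rfl | hp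
  · rw [norm_eq_ciSup, norm_eq_ciSup]
    exact ciSup_mono (Finite.bddAbove_range _) h
  · have hp0 : 0 < p.toReal := zero_lt_one.trans_le hp
    rw [norm_eq_sum hp0, norm_eq_sum hp0]
    gcongr with i
    exact h i

theorem enorm_eq_sum (hp : p ≠ ⊤) {β : ι → Type*} [∀ i, SeminormedAddCommGroup (β i)]
    (f : PiLp p β) : ‖f‖ₑ = (∑ i, ‖f i‖ₑ ^ p.toReal) ^ (1 / p.toReal) := by
  have hp0 : 0 < p.toReal := ENNReal.toReal_pos (zero_lt_one.trans_le Fact.out).ne' hp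
  simp [enorm, nnnorm_eq_sum hp, ENNReal.coe_rpow_of_nonneg, hp0.le]

variable {β γ : ι → Type*} [∀ i, SeminormedAddCommGroup (β i)] [∀ i, NormedSpace ℝ (β i)]
  [∀ i, SeminormedAddCommGroup (γ i)] [∀ i, NormedSpace ℝ (γ i)] {S : ∀ i, β i →ₗ[ℝ] γ i}

theorem norm_piMapₗ_le {C : ℝ} (hC : 0 ≤ C) (hS : ∀ i y, ‖S i y‖ ≤ C * ‖y‖) (x : PiLp p β) :
    ‖piMapₗ p S x‖ ≤ C * ‖x‖ := by
  rw [← Real.norm_of_nonneg hC, ← norm_smul]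
  refine norm_le_of_forall_norm_apply_le fun i => ?_
  simpa [norm_smul, abs_of_nonneg hC] using hS i (x i)

theorem norm_le_norm_piMapₗ (hS : ∀ i y, ‖y‖ ≤ ‖S i y‖) (x : PiLp p β) :
    ‖x‖ ≤ ‖piMapₗ p S x‖ :=
  norm_le_of_forall_norm_apply_le fun i => hS i (x i)

end PiLp

theorem exists_linearMap_piLp_sum_copies {E : Type*} [SeminormedAddCommGroup E] [NormedSpace ℝ E]
    (p : ℝ≥0∞) [Fact (1 ≤ p)] {C : ℝ} (hC : 0 ≤ C) {N : ℕ}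
    (S : E →ₗ[ℝ] PiLp p (fun _ : Fin N => ℝ)) (hS : ∀ y, ‖y‖ ≤ ‖S y‖ ∧ ‖S y‖ ≤ C * ‖y‖) (m : ℕ) :
    ∃ T : PiLp p (fun _ : Fin m => E) →ₗ[ℝ] PiLp p (fun _ : Fin (m * N) => ℝ),
      ∀ x, ‖x‖ ≤ ‖T x‖ ∧ ‖T x‖ ≤ C * ‖x‖ := by
  let flatten : PiLp p (fun _ : Fin m => PiLp p (fun _ : Fin N => ℝ)) ≃ₗᵢ[ℝ]
      PiLp p (fun _ : Fin (m * N) => ℝ) :=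
    (LinearIsometryEquiv.piLpCurry ℝ p fun (_ : Fin m) (_ : Fin N) => ℝ).symm.trans
      (LinearIsometryEquiv.piLpCongrLeft p ℝ ℝ ((Equiv.sigmaEquivProd _ _).trans finProdFinEquiv))
  refine ⟨flatten.toLinearEquiv.toLinearMap ∘ₗ PiLp.piMapₗ p fun _ => S, fun x => ?_⟩
  rw [LinearMap.comp_apply, LinearEquiv.coe_coe, LinearIsometryEquiv.coe_toLinearEquiv,
    LinearIsometryEquiv.norm_map]
  exact ⟨PiLp.norm_le_norm_piMapₗ (fun _ y => (hS y).1) x,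
    PiLp.norm_piMapₗ_le hC (fun _ y => (hS y).2) x⟩

section RotationInvariant

variable {E : Type*} [NormedAddCommGroup E] [InnerProductSpace ℝ E] [MeasurableSpace E]
  [BorelSpace E] {μ : Measure E} {p : ℝ≥0∞}

theorem eLpNorm_inner_left_eq_of_norm_eq (hμ : ∀ R : E ≃ₗᵢ[ℝ] E, MeasurePreserving R μ μ)
    {u v : E} (h : ‖u‖ = ‖v‖) :
    eLpNorm (fun θ => ⟪u, θ⟫) p μ = eLpNorm (fun θ => ⟪v, θ⟫) p μ := by
  set R := (ℝ ∙ (v - u))ᗮ.reflection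
  have hR : (fun θ => ⟪u, θ⟫) = (fun θ => ⟪v, θ⟫) ∘ R.symm := by
    ext θ
    rw [← Submodule.reflection_sub h.symm, Function.comp_apply, R.inner_map_eq_flip]
  rw [hR, eLpNorm_comp_measurePreserving (by fun_prop) (hμ R.symm)]

theorem eLpNorm_inner_left (hμ : ∀ R : E ≃ₗᵢ[ℝ] E, MeasurePreserving R μ μ) {u : E}
    (hu : ‖u‖ = 1) (x : E) :
    eLpNorm (fun θ => ⟪x, θ⟫) p μ = ‖x‖ₑ * eLpNorm (fun θ => ⟪u, θ⟫) p μ := by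
  rw [← enorm_norm x, ← eLpNorm_const_smul,
    eLpNorm_inner_left_eq_of_norm_eq hμ (v := ‖x‖ • u) (by simp [norm_smul, hu])]
  congr 1
  ext θ
  simp [real_inner_smul_left]

end RotationInvariant

section UnitBall

variable {E : Type*} [NormedAddCommGroup E] [InnerProductSpace ℝ E] [FiniteDimensional ℝ E]
  [MeasurableSpace E] [BorelSpace E]

theorem measurePreserving_restrict_closedBall (R : E ≃ₗᵢ[ℝ] E) :
    MeasurePreserving R (volume.restrict (closedBall 0 1)) (volume.restrict (closedBall 0 1)) := by
  have hR : R ⁻¹' closedBall 0 1 = closedBall 0 1 := by ext; simp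
  simpa [hR] using R.measurePreserving.restrict_preimage (measurableSet_closedBall (x := (0 : E)))

theorem eLpNorm_inner_left_restrict_closedBall_ne_zero (hp : p ≠ 0) {u : E} (hu : u ≠ 0) :
    eLpNorm (fun θ => ⟪u, θ⟫) p (volume.restrict (closedBall 0 1)) ≠ 0 := by
  rw [Ne, eLpNorm_eq_zero_iff (by fun_prop) hp, Filter.EventuallyEq,
    ae_restrict_iff' measurableSet_closedBall]
  intro h
  have hker : LinearMap.ker (innerₛₗ ℝ u) ≠ ⊤ := fun htop => by
    simpa [hu] using (LinearMap.ker_eq_top.1 htop ▸ rfl : innerₛₗ ℝ u u = 0)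
  refine (measure_closedBall_pos volume (0 : E) one_pos).ne' (measure_mono_null_ae ?_
    (Measure.addHaar_submodule volume _ hker))
  filter_upwards [h] with θ hθ hmem
  exact hθ hmem

end UnitBall

namespace MeasureTheory.SimpleFunc

variable {E : Type*} [NormedAddCommGroup E] [InnerProductSpace ℝ E] [MeasurableSpace E]

noncomputable def innerStepMap (p : ℝ≥0∞) (μ : Measure E) (σ : SimpleFunc E E) :
    E →ₗ[ℝ] PiLp p (fun _ : σ.range => ℝ) where
  toFun x := WithLp.toLp p fun v => μ.real (σ ⁻¹' {(v : E)}) ^ (1 / p.toReal) * ⟪x, v⟫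
  map_add' x y := by ext v; simp [inner_add_left, mul_add]
  map_smul' c x := by ext v; simp [real_inner_smul_left]; ring

theorem eLpNorm_inner_comp_eq_enorm_innerStepMap {p : ℝ≥0∞} [Fact (1 ≤ p)] (hp : p ≠ ⊤)
    {μ : Measure E} [IsFiniteMeasure μ] (σ : SimpleFunc E E) (x : E) :
    eLpNorm (fun θ => ⟪x, σ θ⟫) p μ = ‖innerStepMap p μ σ x‖ₑ := by
  have hp0 : 0 < p.toReal := ENNReal.toReal_pos (zero_lt_one.trans_le Fact.out).ne' hp
  rw [eLpNorm_eq_lintegral_rpow_enorm_toReal (zero_lt_one.trans_le Fact.out).ne' hp,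
    PiLp.enorm_eq_sum hp]
  congr 1
  have hterm (v : E) : ‖μ.real (σ ⁻¹' {v}) ^ (1 / p.toReal) * ⟪x, v⟫‖ₑ ^ p.toReal
      = ‖⟪x, v⟫‖ₑ ^ p.toReal * μ (σ ⁻¹' {v}) := by
    rw [enorm_mul, ENNReal.mul_rpow_of_nonneg _ _ hp0.le, mul_comm]
    congr 1
    rw [Real.enorm_eq_ofReal (by positivity), ENNReal.ofReal_rpow_of_nonneg (by positivity) hp0.le,
      ← Real.rpow_mul measureReal_nonneg, one_div_mul_cancel hp0.ne', Real.rpow_one,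
      ofReal_measureReal]
  calc ∫⁻ θ, ‖⟪x, σ θ⟫‖ₑ ^ p.toReal ∂μ
      = (σ.map fun v => ‖⟪x, v⟫‖ₑ ^ p.toReal).lintegral μ := by
        rw [← lintegral_eq_lintegral, coe_map]; rfl
    _ = ∑ v : σ.range, ‖innerStepMap p μ σ x v‖ₑ ^ p.toReal := by
        rw [map_lintegral, ← Finset.sum_coe_sort]
        exact Finset.sum_congr rfl fun v _ => (hterm v).symm

end MeasureTheory.SimpleFunc

theorem eLpNorm_inner_comp_le {α E : Type*} [MeasurableSpace α] [NormedAddCommGroup E]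
    [InnerProductSpace ℝ E] (x : E) (f : α → E) (p : ℝ≥0∞) (μ : Measure α) :
    eLpNorm (fun θ => ⟪x, f θ⟫) p μ ≤ ‖x‖ₑ * eLpNorm f p μ :=
  eLpNorm_le_nnreal_smul_eLpNorm_of_ae_le_mul (ae_of_all _ fun _ => nnnorm_inner_le_nnnorm _ _) p

section Approximation

variable {E : Type*} [NormedAddCommGroup E] [InnerProductSpace ℝ E] [MeasurableSpace E]
  {p : ℝ≥0∞} [Fact (1 ≤ p)] {μ : Measure E}

theorem exists_linearMap_piLp_enorm_near [IsFiniteMeasure μ] (hp : p ≠ ⊤) (hid : MemLp id p μ)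
    {η : ℝ≥0∞} (hη : η ≠ 0) :
    ∃ (N : ℕ) (S : E →ₗ[ℝ] PiLp p (fun _ : Fin N => ℝ)), ∀ x,
      ‖S x‖ₑ ≤ eLpNorm (fun θ => ⟪x, θ⟫) p μ + ‖x‖ₑ * η ∧
      eLpNorm (fun θ => ⟪x, θ⟫) p μ ≤ ‖S x‖ₑ + ‖x‖ₑ * η := by
  obtain ⟨σ, hσ, -⟩ := hid.exists_simpleFunc_eLpNorm_sub_lt hp hη
  let e := LinearIsometryEquiv.piLpCongrLeft p ℝ ℝ (Fintype.equivFin σ.range)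
  refine ⟨_, e.toLinearEquiv.toLinearMap ∘ₗ σ.innerStepMap p μ, fun x => ?_⟩
  rw [LinearMap.comp_apply, LinearEquiv.coe_coe, LinearIsometryEquiv.coe_toLinearEquiv,
    LinearIsometryEquiv.enorm_map, ← σ.eLpNorm_inner_comp_eq_enorm_innerStepMap hp]
  have hf : AEStronglyMeasurable (fun θ => ⟪x, θ⟫) μ :=
    (innerSL ℝ x).continuous.comp_aestronglyMeasurable hid.1
  have hg : AEStronglyMeasurable (fun θ => ⟪x, σ θ⟫) μ :=
    (innerSL ℝ x).continuous.comp_aestronglyMeasurable σ.aestronglyMeasurable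
  have herr : eLpNorm ((fun θ => ⟪x, θ⟫) - fun θ => ⟪x, σ θ⟫) p μ ≤ ‖x‖ₑ * η :=
    calc eLpNorm ((fun θ => ⟪x, θ⟫) - fun θ => ⟪x, σ θ⟫) p μ
        = eLpNorm (fun θ => ⟪x, ((id : E → E) - σ) θ⟫) p μ := by simp [Pi.sub_def, inner_sub_right]
      _ ≤ ‖x‖ₑ * η := (eLpNorm_inner_comp_le x _ p μ).trans (by gcongr)
  constructor
  · calc eLpNorm (fun θ => ⟪x, σ θ⟫) p μ
        = eLpNorm ((fun θ => ⟪x, θ⟫) - ((fun θ => ⟪x, θ⟫) - fun θ => ⟪x, σ θ⟫)) p μ := by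
          rw [sub_sub_cancel]
      _ ≤ _ := (eLpNorm_sub_le hf (hf.sub hg) Fact.out).trans (by gcongr)
  · calc eLpNorm (fun θ => ⟪x, θ⟫) p μ
        = eLpNorm ((fun θ => ⟪x, σ θ⟫) + ((fun θ => ⟪x, θ⟫) - fun θ => ⟪x, σ θ⟫)) p μ := by
          rw [add_sub_cancel]
      _ ≤ _ := (eLpNorm_add_le hg (hf.sub hg) Fact.out).trans (by gcongr)

end Approximation

section FiniteDimensional

variable {E : Type*} [NormedAddCommGroup E] [InnerProductSpace ℝ E] [FiniteDimensional ℝ E]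
  {p : ℝ≥0∞} [Fact (1 ≤ p)]

theorem exists_linearMap_piLp_norm_near [Nontrivial E] (hp : p ≠ ⊤) :
    ∃ c : ℝ, 0 < c ∧ ∀ η : ℝ, 0 < η → ∃ (N : ℕ) (S : E →ₗ[ℝ] PiLp p (fun _ : Fin N => ℝ)),
      ∀ x, ‖S x‖ ≤ (c + η) * ‖x‖ ∧ (c - η) * ‖x‖ ≤ ‖S x‖ := by
  let : MeasurableSpace E := borel E
  have : BorelSpace E := ⟨rfl⟩
  set μ : Measure E := volume.restrict (closedBall 0 1)
  have : IsFiniteMeasure μ := isFiniteMeasure_restrict.2 measure_closedBall_lt_top.ne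
  have hid : MemLp id p μ := MemLp.of_bound aestronglyMeasurable_id 1
    (ae_restrict_of_forall_mem measurableSet_closedBall fun θ hθ => by simpa using hθ)
  obtain ⟨u, hu⟩ := exists_norm_eq E zero_le_one
  have hc_top : eLpNorm (fun θ => ⟪u, θ⟫) p μ ≠ ⊤ := ((eLpNorm_inner_comp_le u id p μ).trans_lt
    (ENNReal.mul_lt_top enorm_lt_top hid.2)).ne
  have hc_ne : eLpNorm (fun θ => ⟪u, θ⟫) p μ ≠ 0 :=
    eLpNorm_inner_left_restrict_closedBall_ne_zero (zero_lt_one.trans_le Fact.out).ne'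
      (norm_ne_zero_iff.1 (hu ▸ one_ne_zero))
  refine ⟨_, ENNReal.toReal_pos hc_ne hc_top, fun η hη => ?_⟩
  obtain ⟨N, S, hS⟩ := exists_linearMap_piLp_enorm_near hp hid (ENNReal.ofReal_pos.2 hη).ne'
  refine ⟨N, S, fun x => ?_⟩
  obtain ⟨hupper, hlower⟩ := hS x
  rw [eLpNorm_inner_left (μ := μ) measurePreserving_restrict_closedBall hu x,
    ← ENNReal.ofReal_toReal hc_top] at hupper hlower
  have hc := ENNReal.toReal_nonneg (a := eLpNorm (fun θ => ⟪u, θ⟫) p μ)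
  simp only [← ofReal_norm, ← ENNReal.ofReal_mul (norm_nonneg _)] at hupper hlower
  rw [← ENNReal.ofReal_add (by positivity) (by positivity),
    ENNReal.ofReal_le_ofReal_iff (by positivity)] at hupper hlower
  constructor <;> linarith

theorem exists_linearMap_piLp_almost_isometry (hp : p ≠ ⊤) {ε : ℝ} (hε : 0 < ε) :
    ∃ (N : ℕ) (S : E →ₗ[ℝ] PiLp p (fun _ : Fin N => ℝ)),
      ∀ x, ‖x‖ ≤ ‖S x‖ ∧ ‖S x‖ ≤ (1 + ε) * ‖x‖ := by
  rcases subsingleton_or_nontrivial E with hE | hE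
  · exact ⟨0, 0, fun x => by simp [Subsingleton.elim x 0]⟩
  obtain ⟨c, hc, hS⟩ := exists_linearMap_piLp_norm_near (E := E) hp
  -- with `η = c ε / (2 + ε)` one has `c + η = (1 + ε) (c - η)`
  obtain ⟨N, S, hS⟩ := hS (c * ε / (2 + ε)) (by positivity)
  have hcη : 0 < c - c * ε / (2 + ε) := by
    rw [sub_pos, mul_div_assoc]
    exact mul_lt_of_lt_one_right hc ((div_lt_one (by positivity)).2 (by linarith))
  refine ⟨N, (c - c * ε / (2 + ε))⁻¹ • S, fun x => ?_⟩
  rw [LinearMap.smul_apply, norm_smul, Real.norm_of_nonneg (inv_nonneg.2 hcη.le),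
    le_inv_mul_iff₀ hcη, inv_mul_le_iff₀ hcη]
  refine ⟨(hS x).2, (hS x).1.trans_eq ?_⟩
  field_simp
  ring

end FiniteDimensional

theorem stmt_14_general (p : ℝ≥0∞) [Fact (1 ≤ p)] (hp : p ≠ ⊤) (ε : ℝ) (hε : 0 < ε)
    (m k : ℕ) :
    ∃ (N : ℕ) (T : PiLp p (fun _ : Fin m => EuclideanSpace ℝ (Fin k)) →ₗ[ℝ]
        PiLp p (fun _ : Fin N => ℝ)),
      ∀ x, ‖x‖ ≤ ‖T x‖ ∧ ‖T x‖ ≤ (1 + ε) * ‖x‖ := by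
  obtain ⟨N, S, hS⟩ :=
    exists_linearMap_piLp_almost_isometry (E := EuclideanSpace ℝ (Fin k)) hp hε
  obtain ⟨T, hT⟩ := exists_linearMap_piLp_sum_copies p (by positivity) S hS m
  exact ⟨m * N, T, hT⟩

/-- For every `1 ≤ p < ∞`, `ε > 0` and positive integers `m, k`, there exists `N` such
that the `ℓ_p^m`-sum of `m` copies of `ℓ_2^k` embeds into `ℓ_p^N` with constant `1 + ε`:
there is a linear map `T` with `‖x‖ ≤ ‖T x‖ ≤ (1+ε)‖x‖` for all `x`. -/
theorem stmt_14 (p : ℝ≥0∞) [Fact (1 ≤ p)] (hp : p ≠ ⊤) (ε : ℝ) (hε : 0 < ε)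
    (m k : ℕ) (hm : 0 < m) (hk : 0 < k) :
    ∃ (N : ℕ) (T : PiLp p (fun _ : Fin m => EuclideanSpace ℝ (Fin k)) →ₗ[ℝ]
        PiLp p (fun _ : Fin N => ℝ)),
      ∀ x, ‖x‖ ≤ ‖T x‖ ∧ ‖T x‖ ≤ (1 + ε) * ‖x‖ :=
  stmt_14_general p hp ε hε m k
end

section
/- For 1 ≤ p < 2, every bounded linear operator T from ℓ_p to ℓ_2 is strictly singular: T is not an isomorphism onto its image when restricted to any infinite-dimensional closed subspace of ℓ_p. -/
open scoped ENNReal NNReal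
open Finset Function

/-!
If `c ‖y‖ ≤ ‖T y‖` on `Y`, a gliding-hump argument produces unit vectors `y₀, …, y_{n-1}` in `Y`
that are disjointly supported up to a small error, so that every sign combination `∑ εᵢ yᵢ` has
ℓ_p-norm at least `n^{1/p} / 2`. In a Hilbert space the parallelogram law chooses signs with
`‖∑ εᵢ T yᵢ‖ ≤ √n ‖T‖`. Hence `c n^{1/p} / 2 ≤ √n ‖T‖` for every `n`, impossible for large `n`
because `p < 2`.
-/

section SignChoice

variable {F : Type*} [NormedAddCommGroup F] [InnerProductSpace ℝ F]

theorem exists_sign_norm_add_smul_sq_le (s v : F) :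
    ∃ e : ℝ, ‖e‖ = 1 ∧ ‖s + e • v‖ ^ 2 ≤ ‖s‖ ^ 2 + ‖v‖ ^ 2 := by
  have := parallelogram_law_with_norm ℝ s v
  rcases le_total ‖s + v‖ ‖s - v‖ with h | h
  · exact ⟨1, by simp, by rw [one_smul]; nlinarith [norm_nonneg (s + v)]⟩
  · exact ⟨-1, by simp, by rw [neg_one_smul, ← sub_eq_add_neg]; nlinarith [norm_nonneg (s - v)]⟩

theorem exists_signs_norm_sum_smul_sq_le (v : ℕ → F) (n : ℕ) :
    ∃ ε : ℕ → ℝ, (∀ i, ‖ε i‖ = 1) ∧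
      ‖∑ i ∈ range n, ε i • v i‖ ^ 2 ≤ ∑ i ∈ range n, ‖v i‖ ^ 2 := by
  induction n with
  | zero => exact ⟨fun _ => 1, by simp, by simp⟩
  | succ n ih =>
    obtain ⟨ε, hε, hle⟩ := ih
    obtain ⟨e, he, hse⟩ := exists_sign_norm_add_smul_sq_le (∑ i ∈ range n, ε i • v i) (v n)
    refine ⟨update ε n e, fun i => ?_, ?_⟩
    · rcases eq_or_ne i n with rfl | hi
      · simpa
      · simpa [update_of_ne hi] using hε i
    · have hsum : ∑ i ∈ range n, update ε n e i • v i = ∑ i ∈ range n, ε i • v i :=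
        sum_congr rfl fun i hi => by rw [update_of_ne (mem_range.1 hi).ne]
      rw [sum_range_succ, sum_range_succ, update_self, hsum]
      linarith

theorem exists_signs_norm_sum_smul_le_sqrt_mul (v : ℕ → F) (n : ℕ) {K : ℝ}
    (hK : ∀ i, ‖v i‖ ≤ K) :
    ∃ ε : ℕ → ℝ, (∀ i, ‖ε i‖ = 1) ∧ ‖∑ i ∈ range n, ε i • v i‖ ≤ √n * K := by
  obtain ⟨ε, hε, hle⟩ := exists_signs_norm_sum_smul_sq_le v n
  have hK0 : 0 ≤ K := (norm_nonneg _).trans (hK 0)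
  have hsq : ‖∑ i ∈ range n, ε i • v i‖ ^ 2 ≤ n * K ^ 2 :=
    calc ‖∑ i ∈ range n, ε i • v i‖ ^ 2 ≤ ∑ i ∈ range n, ‖v i‖ ^ 2 := hle
      _ ≤ ∑ _i ∈ range n, K ^ 2 := sum_le_sum fun i _ => pow_le_pow_left₀ (norm_nonneg _) (hK i) 2
      _ = n * K ^ 2 := by simp
  refine ⟨ε, hε, ?_⟩
  rw [← Real.sqrt_sq hK0, ← Real.sqrt_mul (Nat.cast_nonneg n)]
  exact Real.le_sqrt_of_sq_le hsq

end SignChoice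

theorem norm_sub_sum_erase_le_norm_sum_smul {ι 𝕜 E : Type*} [DecidableEq ι] [NormedField 𝕜]
    [SeminormedAddCommGroup E] [NormedSpace 𝕜 E] {s : Finset ι} {i : ι} (hi : i ∈ s)
    {ε : ι → 𝕜} (hε : ∀ j, ‖ε j‖ = 1) (v : ι → E) :
    ‖v i‖ - ∑ j ∈ s.erase i, ‖v j‖ ≤ ‖∑ j ∈ s, ε j • v j‖ := by
  rw [← add_sum_erase s _ hi]
  have hrest : ‖∑ j ∈ s.erase i, ε j • v j‖ ≤ ∑ j ∈ s.erase i, ‖v j‖ :=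
    (norm_sum_le _ _).trans_eq (by simp [norm_smul, hε])
  have := norm_sub_norm_le (ε i • v i) (-∑ j ∈ s.erase i, ε j • v j)
  rw [norm_neg, sub_neg_eq_add, norm_smul, hε, one_mul] at this
  linarith

theorem one_sub_le_of_one_sub_rpow_le {q a δ : ℝ} (hq : 1 ≤ q) (ha : 0 ≤ a) (hδ : 0 ≤ δ)
    (h : 1 - δ ^ q ≤ a ^ q) : 1 - δ ≤ a := by
  rcases le_total δ 1 with hδ1 | hδ1
  · rcases le_total a 1 with ha1 | ha1
    · linarith [Real.rpow_le_self_of_le_one ha ha1 hq, Real.rpow_le_self_of_le_one hδ hδ1 hq]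
    · linarith
  · linarith

theorem exists_nat_sqrt_mul_lt_mul_rpow_inv {q : ℝ} (hq0 : 0 < q) (hq2 : q < 2) (K : ℝ) {c : ℝ}
    (hc : 0 < c) : ∃ n : ℕ, √n * K < c * ((n : ℝ) ^ q⁻¹ / 2) := by
  have hexp : 0 < q⁻¹ - 2⁻¹ := sub_pos.2 (inv_strictAnti₀ hq0 hq2)
  have htend := (tendsto_rpow_atTop hexp).comp tendsto_natCast_atTop_atTop
  obtain ⟨n, hn1, hn⟩ := ((Filter.eventually_ge_atTop 1).and
    (htend.eventually_gt_atTop (2 * K / c))).exists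
  have hn0 : (0 : ℝ) < n := by exact_mod_cast hn1
  refine ⟨n, ?_⟩
  have hsplit : (n : ℝ) ^ q⁻¹ = (n : ℝ) ^ (q⁻¹ - 2⁻¹) * √n := by
    rw [Real.sqrt_eq_rpow, ← Real.rpow_add hn0]; norm_num
  rw [hsplit]
  have := (div_lt_iff₀ hc).1 hn
  have hsqrt : 0 < √(n : ℝ) := Real.sqrt_pos.2 hn0
  simp only [comp_apply] at this
  nlinarith

namespace lp

variable {ι : Type*} {E : ι → Type*} [∀ i, NormedAddCommGroup (E i)] [∀ i, NormedSpace ℝ (E i)]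
  {p : ℝ≥0∞}

noncomputable def restrictFinset (S : Finset ι) : lp E p →ₗ[ℝ] PiLp p (fun k : S => E k) where
  toFun x := WithLp.toLp p fun k => x k
  map_add' x y := by ext; simp
  map_smul' c x := by ext; simp

theorem norm_restrictFinset_rpow (hp : 0 < p.toReal) (S : Finset ι) (x : lp E p) :
    ‖restrictFinset S x‖ ^ p.toReal = ∑ k ∈ S, ‖x k‖ ^ p.toReal := by
  rw [PiLp.norm_eq_sum hp, ← Real.rpow_mul (by positivity), one_div, inv_mul_cancel₀ hp.ne',
    Real.rpow_one, ← sum_coe_sort S]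
  rfl

theorem sum_norm_restrictFinset_rpow_le (hp : 0 < p.toReal) {α : Type*} {s : Finset α}
    {W : α → Finset ι} (hW : (s : Set α).PairwiseDisjoint W) (x : lp E p) :
    ∑ i ∈ s, ‖restrictFinset (W i) x‖ ^ p.toReal ≤ ‖x‖ ^ p.toReal := by
  classical
  simp_rw [norm_restrictFinset_rpow hp, ← sum_biUnion hW]
  exact sum_rpow_le_norm_rpow hp x _

end lp

section AlmostDisjoint

variable {ι : Type*} {E : ι → Type*} [∀ i, NormedAddCommGroup (E i)] [∀ i, NormedSpace ℝ (E i)]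
  {p : ℝ≥0∞}

structure IsAlmostDisjointlySupported (δ : ℝ) (y : ℕ → lp E p) (W : ℕ → Finset ι) : Prop where
  disjoint : Pairwise (Disjoint on W)
  one_sub_le_norm_restrict : ∀ i, 1 - δ ≤ ‖lp.restrictFinset (W i) (y i)‖
  norm_restrict_le : ∀ i j, i ≠ j → ‖lp.restrictFinset (W i) (y j)‖ ≤ δ

theorem IsAlmostDisjointlySupported.rpow_inv_div_two_le_norm_sum [Fact (1 ≤ p)] {δ : ℝ}
    {y : ℕ → lp E p} {W : ℕ → Finset ι} (h : IsAlmostDisjointlySupported δ y W) (hp : p ≠ ∞)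
    {n : ℕ} (hnδ : (n + 1) * δ ≤ 1 / 2) {ε : ℕ → ℝ} (hε : ∀ i, ‖ε i‖ = 1) :
    (n : ℝ) ^ p.toReal⁻¹ / 2 ≤ ‖∑ i ∈ range n, ε i • y i‖ := by
  set x := ∑ i ∈ range n, ε i • y i
  have hq : 0 < p.toReal := ENNReal.toReal_pos (zero_lt_one.trans_le Fact.out).ne' hp
  have hδ : 0 ≤ δ := (norm_nonneg _).trans (h.norm_restrict_le 0 1 zero_ne_one)
  have hwindow : ∀ i ∈ range n, 1 / 2 ≤ ‖lp.restrictFinset (W i) x‖ := by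
    intro i hi
    have hcross : ∑ j ∈ (range n).erase i, ‖lp.restrictFinset (W i) (y j)‖ ≤ n * δ :=
      calc _ ≤ ∑ _j ∈ (range n).erase i, δ :=
            sum_le_sum fun j hj => h.norm_restrict_le i j (ne_of_mem_erase hj).symm
        _ ≤ ∑ _j ∈ range n, δ := sum_le_sum_of_subset_of_nonneg (erase_subset _ _)
            fun _ _ _ => hδ
        _ = n * δ := by simp
    have := norm_sub_sum_erase_le_norm_sum_smul hi hε fun j => lp.restrictFinset (W i) (y j)
    simp only [x, map_sum, map_smul]
    linarith [h.one_sub_le_norm_restrict i]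
  have hpow : (n : ℝ) * (1 / 2) ^ p.toReal ≤ ‖x‖ ^ p.toReal :=
    calc (n : ℝ) * (1 / 2) ^ p.toReal = ∑ _i ∈ range n, (1 / 2 : ℝ) ^ p.toReal := by simp
      _ ≤ ∑ i ∈ range n, ‖lp.restrictFinset (W i) x‖ ^ p.toReal :=
        sum_le_sum fun i hi => Real.rpow_le_rpow (by norm_num) (hwindow i hi) hq.le
      _ ≤ ‖x‖ ^ p.toReal :=
        lp.sum_norm_restrictFinset_rpow_le hq (h.disjoint.set_pairwise _) x
  rw [← Real.rpow_le_rpow_iff (by positivity) (norm_nonneg _) hq]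
  convert hpow using 1
  rw [Real.div_rpow (by positivity) (by norm_num), Real.div_rpow (by norm_num) (by norm_num),
    Real.one_rpow, Real.rpow_inv_rpow (Nat.cast_nonneg n) hq.ne', div_eq_mul_one_div]

end AlmostDisjoint

theorem exists_mem_norm_eq_one_forall_mem_apply_eq_zero {ι : Type*} {p : ℝ≥0∞} [Fact (1 ≤ p)]
    {Y : Submodule ℝ (lp (fun _ : ι => ℝ) p)} (hY : ¬ FiniteDimensional ℝ Y) (s : Finset ι) :
    ∃ y ∈ Y, ‖y‖ = 1 ∧ ∀ k ∈ s, y k = 0 := by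
  set f : Y →ₗ[ℝ] (s → ℝ) :=
    LinearMap.pi (fun k : s => lp.evalₗ (𝕜 := ℝ) (fun _ : ι => ℝ) p k.1) ∘ₗ Y.subtype
  have hker : LinearMap.ker f ≠ ⊥ := fun h =>
    hY (FiniteDimensional.of_injective f (LinearMap.ker_eq_bot.1 h))
  obtain ⟨z, hz, hz0⟩ := Submodule.exists_mem_ne_zero_of_ne_bot hker
  have hz0' : (z : lp (fun _ : ι => ℝ) p) ≠ 0 := by simpa using hz0
  refine ⟨‖(z : lp (fun _ : ι => ℝ) p)‖⁻¹ • z, Y.smul_mem _ z.2, norm_smul_inv_norm hz0',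
    fun k hk => ?_⟩
  have hzk : (z : lp (fun _ : ι => ℝ) p) k = 0 := congr_fun (LinearMap.mem_ker.1 hz) ⟨k, hk⟩
  simp [hzk]

theorem lp.exists_lt_norm_rpow_sub_le_sum_range {E : ℕ → Type*} [∀ i, NormedAddCommGroup (E i)]
    {p : ℝ≥0∞} (hp : 0 < p.toReal) (x : lp E p) {η : ℝ} (hη : 0 < η) (N : ℕ) :
    ∃ M, N < M ∧ ‖x‖ ^ p.toReal - η ≤ ∑ k ∈ range M, ‖x k‖ ^ p.toReal :=
  ((Filter.eventually_gt_atTop N).and ((lp.hasSum_norm hp x).tendsto_sum_nat.eventually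
    (eventually_ge_nhds (sub_lt_self _ hη)))).exists

theorem exists_isAlmostDisjointlySupported {p : ℝ≥0∞} [Fact (1 ≤ p)] (hp : p ≠ ∞)
    {Y : Submodule ℝ (lp (fun _ : ℕ => ℝ) p)} (hY : ¬ FiniteDimensional ℝ Y) {δ : ℝ}
    (hδ : 0 < δ) :
    ∃ (y : ℕ → lp (fun _ : ℕ => ℝ) p) (W : ℕ → Finset ℕ),
      (∀ i, y i ∈ Y ∧ ‖y i‖ = 1) ∧ IsAlmostDisjointlySupported δ y W := by
  have hp1 : 1 ≤ p.toReal := by simpa using ENNReal.toReal_mono hp (Fact.out : (1 : ℝ≥0∞) ≤ p)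
  have hq : 0 < p.toReal := zero_lt_one.trans_le hp1
  have hstep : ∀ N : ℕ, ∃ y ∈ Y, ‖y‖ = 1 ∧ (∀ k ∈ range N, y k = 0) ∧
      ∃ M, N < M ∧ 1 - δ ^ p.toReal ≤ ∑ k ∈ range M, ‖y k‖ ^ p.toReal := by
    intro N
    obtain ⟨y, hyY, hy1, hy0⟩ := exists_mem_norm_eq_one_forall_mem_apply_eq_zero hY (range N)
    obtain ⟨M, hNM, hM⟩ :=
      lp.exists_lt_norm_rpow_sub_le_sum_range hq y (Real.rpow_pos_of_pos hδ _) N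
    exact ⟨y, hyY, hy1, hy0, M, hNM, by rwa [hy1, Real.one_rpow] at hM⟩
  choose z hzY hz1 hz0 M hNM hM using hstep
  set N : ℕ → ℕ := fun i => M^[i] 0
  have hNsucc : ∀ i, N (i + 1) = M (N i) := fun i => iterate_succ_apply' M i 0
  have hN : StrictMono N := strictMono_nat_of_lt_succ fun i => (hNsucc i).symm ▸ hNM (N i)
  refine ⟨fun i => z (N i), fun i => Ico (N i) (N (i + 1)), fun i => ⟨hzY _, hz1 _⟩,
    ⟨fun i j hij => ?_, fun i => ?_, fun i j hij => ?_⟩⟩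
  · rw [onFun, ← disjoint_coe, coe_Ico, coe_Ico]
    exact hN.monotone.pairwise_disjoint_on_Ico_succ hij
  · refine one_sub_le_of_one_sub_rpow_le hp1 (norm_nonneg _) hδ.le ?_
    have hhead : ∑ k ∈ range (N i), ‖z (N i) k‖ ^ p.toReal = 0 :=
      sum_eq_zero fun k hk => by rw [hz0 _ k hk, norm_zero, Real.zero_rpow hq.ne']
    rw [lp.norm_restrictFinset_rpow hq, ← zero_add (∑ k ∈ _, _), ← hhead,
      sum_range_add_sum_Ico _ (hN.monotone i.le_succ), hNsucc]
    exact hM (N i)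
  · rw [← Real.rpow_le_rpow_iff (norm_nonneg _) hδ.le hq, lp.norm_restrictFinset_rpow hq]
    rcases hij.lt_or_gt with hij | hij
    · rw [sum_eq_zero fun k hk => by
        rw [hz0 _ k (mem_range.2 ((mem_Ico.1 hk).2.trans_le (hN.monotone hij))), norm_zero,
          Real.zero_rpow hq.ne']]
      positivity
    · have hdisj : Disjoint (Ico (N i) (N (i + 1))) (range (N (j + 1))) :=
        disjoint_left.2 fun k hk hk' =>
          (mem_range.1 hk').not_ge ((hN.monotone hij).trans (mem_Ico.1 hk).1)
      have htotal :=
        lp.sum_rpow_le_norm_rpow hq (z (N j)) (Ico (N i) (N (i + 1)) ∪ range (N (j + 1)))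
      rw [sum_union hdisj, hz1, Real.one_rpow, hNsucc j] at htotal
      linarith [hM (N j)]

/-- For `1 ≤ p < 2`, every bounded linear operator `T : ℓ_p → ℓ_2` is strictly
singular: for every infinite-dimensional closed subspace `Y ⊆ ℓ_p` and every `c > 0`
there is a nonzero `y ∈ Y` with `‖T y‖ < c ‖y‖`. -/
theorem stmt_15 (p : ℝ≥0∞) [Fact (1 ≤ p)] (hp : p < 2)
    (T : lp (fun _ : ℕ => ℝ) p →L[ℝ] lp (fun _ : ℕ => ℝ) 2) :
    ∀ Y : Submodule ℝ (lp (fun _ : ℕ => ℝ) p),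
      IsClosed (Y : Set (lp (fun _ : ℕ => ℝ) p)) →
      ¬ FiniteDimensional ℝ Y →
      ∀ c : ℝ, 0 < c → ∃ y ∈ Y, y ≠ 0 ∧ ‖T y‖ < c * ‖y‖ := by
  intro Y _ hY c hc
  by_contra! hbelow
  have hp' : p ≠ ∞ := hp.ne_top
  have hq : 0 < p.toReal := ENNReal.toReal_pos (zero_lt_one.trans_le Fact.out).ne' hp'
  have hq2 : p.toReal < 2 := by simpa using (ENNReal.toReal_lt_toReal hp' (by simp)).2 hp
  obtain ⟨n, hn⟩ := exists_nat_sqrt_mul_lt_mul_rpow_inv hq hq2 ‖T‖ hc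
  obtain ⟨y, W, hy, hyW⟩ :=
    exists_isAlmostDisjointlySupported hp' hY (δ := 1 / (2 * (n + 1))) (by positivity)
  obtain ⟨ε, hε, hsigns⟩ := exists_signs_norm_sum_smul_le_sqrt_mul (fun i => T (y i)) n
    fun i => (T.le_opNorm (y i)).trans_eq (by rw [(hy i).2, mul_one])
  set x := ∑ i ∈ range n, ε i • y i
  have hx : (n : ℝ) ^ p.toReal⁻¹ / 2 ≤ ‖x‖ :=
    hyW.rpow_inv_div_two_le_norm_sum hp' (by field_simp; norm_num) hε
  have hTx : ‖T x‖ ≤ √n * ‖T‖ := by simpa only [x, map_sum, map_smul] using hsigns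
  have hx0 : x ≠ 0 := by
    intro h
    rw [h, norm_zero] at hx
    nlinarith [mul_nonneg (Real.sqrt_nonneg n) (norm_nonneg T)]
  have hxY : x ∈ Y := Y.sum_mem fun i _ => Y.smul_mem _ (hy i).1
  have : c * ((n : ℝ) ^ p.toReal⁻¹ / 2) ≤ √n * ‖T‖ :=
    calc c * ((n : ℝ) ^ p.toReal⁻¹ / 2) ≤ c * ‖x‖ := by gcongr
      _ ≤ ‖T x‖ := hbelow x hxY hx0
      _ ≤ √n * ‖T‖ := hTx
  linarith
end

section
/- Let 1 ≤ q < p < ∞ and suppose {y_i} is a normalized block basis of the natural basis of Z_{q,p} = (⊕ ℓ_p)_{ℓ_q} such that there exist integers 0 = N_1 < N_2 < ⋯ with ‖(Q_{N_{i+1}} − Q_{N_i}) y_i‖ ≥ ε > 0 for all i, where Q_N is the projection onto the first N columns. Then for all finitely supported scalars {a_i}: ε(Σ|a_i|^q)^{1/q} ≤ ‖Σ a_i y_i‖ ≤ (Σ|a_i|^q)^{1/q}; in particular {y_i} is equivalent to the unit vector basis of ℓ_q. -/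
/-!
In each column the pieces `a i • y i` have disjoint supports, so the `p`-th power of the `ℓ_p`
norm of a column of `∑ a i • y i` is the sum of those of the pieces. As `q ≤ p`, the map
`t ↦ t ^ (q / p)` is subadditive, which bounds the `q`-th power of the column norm by the sum of
the `q`-th powers of the pieces; summing over the columns gives the upper estimate. Conversely
each piece is dominated by its column, and the bands of columns `[N i, N (i + 1))` are disjoint,
so the band of `i` alone contributes at least `ε ^ q * |a i| ^ q` to `‖∑ a i • y i‖ ^ q`.
-/

open scoped ENNReal NNReal

open Function

namespace Real

theorem rpow_sum_le_sum_rpow {ι : Type*} {s : Finset ι} {f : ι → ℝ} (hf : ∀ i ∈ s, 0 ≤ f i)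
    {r : ℝ} (hr₀ : 0 < r) (hr₁ : r ≤ 1) : (∑ i ∈ s, f i) ^ r ≤ ∑ i ∈ s, f i ^ r :=
  Finset.le_sum_of_subadditive_on_pred (fun x : ℝ => x ^ r) (0 ≤ ·) (zero_rpow hr₀.ne').le
    (fun _ _ hx hy => rpow_add_le_add_rpow hx hy hr₀.le hr₁) (fun _ _ => add_nonneg) _ hf

theorem mul_rpow_one_div_le_iff {c t y r : ℝ} (hc : 0 ≤ c) (ht : 0 ≤ t) (hy : 0 ≤ y)
    (hr : 0 < r) : c * t ^ (1 / r) ≤ y ↔ c ^ r * t ≤ y ^ r := by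
  rw [← rpow_inv_le_iff_of_pos (by positivity) hy hr, mul_rpow (by positivity) ht,
    rpow_rpow_inv hc hr.ne', one_div]

end Real

theorem Finset.apply_sum_of_pairwise_eq_zero {ι M N : Type*} [AddCommMonoid M] [AddCommMonoid N]
    (φ : M → N) (hφ : φ 0 = 0) {s : Finset ι} {f : ι → M}
    (hf : (s : Set ι).Pairwise fun i j => f i = 0 ∨ f j = 0) :
    φ (∑ i ∈ s, f i) = ∑ i ∈ s, φ (f i) := by
  by_cases h : ∃ i ∈ s, f i ≠ 0
  · obtain ⟨i, hi, hfi⟩ := h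
    have hzero : ∀ j ∈ s, j ≠ i → f j = 0 := fun j hj hji =>
      (hf hi hj hji.symm).resolve_left hfi
    rw [Finset.sum_eq_single_of_mem i hi hzero,
      Finset.sum_eq_single_of_mem i hi fun j hj hji => by rw [hzero j hj hji, hφ]]
  · push Not at h
    rw [Finset.sum_eq_zero h, Finset.sum_eq_zero fun i hi => by rw [h i hi, hφ], hφ]

namespace lp

section Disjoint

variable {α ι E : Type*} [NormedAddCommGroup E] {p : ℝ≥0∞}
  {s : Finset ι} {g : ι → lp (fun _ : α => E) p}

theorem norm_sum_rpow_of_pairwiseDisjoint (hp : 0 < p.toReal)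
    (hg : (s : Set ι).PairwiseDisjoint fun i => support (g i)) :
    ‖∑ i ∈ s, g i‖ ^ p.toReal = ∑ i ∈ s, ‖g i‖ ^ p.toReal := by
  have happly (a : α) : ‖(∑ i ∈ s, g i) a‖ ^ p.toReal = ∑ i ∈ s, ‖g i a‖ ^ p.toReal := by
    rw [coeFn_sum, Finset.sum_apply]
    refine Finset.apply_sum_of_pairwise_eq_zero (‖·‖ ^ p.toReal)
      (by simp [Real.zero_rpow hp.ne']) fun i hi j hj hij => ?_
    exact or_iff_not_imp_left.2 fun ha =>
      notMem_support.1 (Set.disjoint_left.1 (hg hi hj hij) ha)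
  rw [norm_rpow_eq_tsum hp, tsum_congr happly,
    Summable.tsum_finsetSum fun i _ => (lp.memℓp (g i)).summable hp]
  exact Finset.sum_congr rfl fun i _ => (norm_rpow_eq_tsum hp (g i)).symm

theorem norm_le_norm_sum_of_pairwiseDisjoint [Fact (1 ≤ p)] (hp : 0 < p.toReal)
    (hg : (s : Set ι).PairwiseDisjoint fun i => support (g i)) {i : ι} (hi : i ∈ s) :
    ‖g i‖ ≤ ‖∑ i ∈ s, g i‖ := by
  refine (Real.rpow_le_rpow_iff (norm_nonneg _) (norm_nonneg _) hp).1 ?_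
  rw [norm_sum_rpow_of_pairwiseDisjoint hp hg]
  exact Finset.single_le_sum (f := fun i => ‖g i‖ ^ p.toReal) (fun _ _ => by positivity) hi

theorem norm_sum_rpow_le_of_pairwiseDisjoint [Fact (1 ≤ p)]
    (hg : (s : Set ι).PairwiseDisjoint fun i => support (g i))
    {r : ℝ} (hr : 0 < r) (hrp : r ≤ p.toReal) :
    ‖∑ i ∈ s, g i‖ ^ r ≤ ∑ i ∈ s, ‖g i‖ ^ r := by
  have hp : 0 < p.toReal := hr.trans_le hrp
  have hpow (x : ℝ) (hx : 0 ≤ x) : (x ^ p.toReal) ^ (r / p.toReal) = x ^ r := by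
    rw [← Real.rpow_mul hx, mul_div_cancel₀ _ hp.ne']
  calc ‖∑ i ∈ s, g i‖ ^ r = (∑ i ∈ s, ‖g i‖ ^ p.toReal) ^ (r / p.toReal) := by
        rw [← norm_sum_rpow_of_pairwiseDisjoint hp hg, hpow _ (norm_nonneg _)]
    _ ≤ ∑ i ∈ s, (‖g i‖ ^ p.toReal) ^ (r / p.toReal) :=
        Real.rpow_sum_le_sum_rpow (fun _ _ => by positivity) (by positivity)
          ((div_le_one hp).2 hrp)
    _ = ∑ i ∈ s, ‖g i‖ ^ r := Finset.sum_congr rfl fun i _ => hpow _ (norm_nonneg _)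

end Disjoint

theorem norm_rpow_le_sum_of_forall_apply {β ι : Type*} {F : β → Type*}
    [∀ b, NormedAddCommGroup (F b)] {q : ℝ≥0∞} (hq : 0 < q.toReal)
    {v : lp F q} {s : Finset ι} {x : ι → lp F q}
    (h : ∀ b, ‖v b‖ ^ q.toReal ≤ ∑ i ∈ s, ‖x i b‖ ^ q.toReal) :
    ‖v‖ ^ q.toReal ≤ ∑ i ∈ s, ‖x i‖ ^ q.toReal := by
  have hsummable (i : ι) : Summable fun b => ‖x i b‖ ^ q.toReal := (lp.memℓp (x i)).summable hq
  rw [norm_rpow_eq_tsum hq]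
  calc ∑' b, ‖v b‖ ^ q.toReal ≤ ∑' b, ∑ i ∈ s, ‖x i b‖ ^ q.toReal :=
        Summable.tsum_le_tsum h ((lp.memℓp v).summable hq) (summable_sum fun i _ => hsummable i)
    _ = ∑ i ∈ s, ‖x i‖ ^ q.toReal := by
        rw [Summable.tsum_finsetSum fun i _ => hsummable i]
        exact Finset.sum_congr rfl fun i _ => (norm_rpow_eq_tsum hq (x i)).symm

theorem support_smul_subset {α 𝕜 E : Type*} [NormedField 𝕜] [NormedAddCommGroup E]
    [NormedSpace 𝕜 E] {p : ℝ≥0∞} [Fact (1 ≤ p)] (c : 𝕜) (f : lp (fun _ : α => E) p) :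
    support (c • f) ⊆ support f := by
  rw [coeFn_smul]
  exact support_const_smul_subset c f

section Matrix

variable {α β ι E : Type*} [NormedAddCommGroup E] {p q : ℝ≥0∞} [Fact (1 ≤ p)]
  {s : Finset ι} {x : ι → lp (fun _ : β => lp (fun _ : α => E) p) q}

theorem pairwise_disjoint_support_apply_of_lex_lt [LinearOrder ι] [Preorder α] [Preorder β]
    (hx : ∀ i i', i < i' → ∀ j u j' u', x i j u ≠ 0 → x i' j' u' ≠ 0 → j < j' ∨ (j = j' ∧ u < u'))
    (j : β) : Pairwise (Disjoint on fun i => support (x i j)) := by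
  intro i i' hne
  refine Set.disjoint_left.2 fun u hu hu' => ?_
  rcases hne.lt_or_gt with h | h
  · simpa using hx i i' h j u j u hu hu'
  · simpa using hx i' i h j u j u hu' hu

theorem norm_sum_rpow_le_of_pairwiseDisjoint_apply (hq : 0 < q.toReal)
    (hqp : q.toReal ≤ p.toReal)
    (hx : ∀ b, (s : Set ι).PairwiseDisjoint fun i => support (x i b)) :
    ‖∑ i ∈ s, x i‖ ^ q.toReal ≤ ∑ i ∈ s, ‖x i‖ ^ q.toReal := by
  refine norm_rpow_le_sum_of_forall_apply hq fun b => ?_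
  rw [coeFn_sum, Finset.sum_apply]
  exact norm_sum_rpow_le_of_pairwiseDisjoint (hx b) hq hqp

theorem sum_sum_rpow_le_norm_sum_rpow_of_pairwiseDisjoint_apply [DecidableEq β]
    (hp : 0 < p.toReal) (hq : 0 < q.toReal)
    (hx : ∀ b, (s : Set ι).PairwiseDisjoint fun i => support (x i b))
    {B : ι → Finset β} (hB : (s : Set ι).PairwiseDisjoint B) :
    ∑ i ∈ s, ∑ b ∈ B i, ‖x i b‖ ^ q.toReal ≤ ‖∑ i ∈ s, x i‖ ^ q.toReal := by
  have hcol {i : ι} (hi : i ∈ s) (b : β) : ‖x i b‖ ≤ ‖(∑ i ∈ s, x i) b‖ := by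
    rw [coeFn_sum, Finset.sum_apply]
    exact norm_le_norm_sum_of_pairwiseDisjoint hp (hx b) hi
  calc ∑ i ∈ s, ∑ b ∈ B i, ‖x i b‖ ^ q.toReal
      ≤ ∑ i ∈ s, ∑ b ∈ B i, ‖(∑ i ∈ s, x i) b‖ ^ q.toReal :=
        Finset.sum_le_sum fun i hi => Finset.sum_le_sum fun b _ =>
          Real.rpow_le_rpow (norm_nonneg _) (hcol hi b) hq.le
    _ = ∑ b ∈ s.biUnion B, ‖(∑ i ∈ s, x i) b‖ ^ q.toReal := (Finset.sum_biUnion hB).symm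
    _ ≤ ‖∑ i ∈ s, x i‖ ^ q.toReal := sum_rpow_le_norm_rpow hq _ _

end Matrix

end lp

theorem stmt_18_general (p q : ℝ≥0∞) [Fact (1 ≤ p)] [Fact (1 ≤ q)]
    (hqp : q < p) (hp : p ≠ ⊤) (ε : ℝ) (hε : 0 < ε)
    (y : ℕ → lp (fun _ : ℕ => lp (fun _ : ℕ => ℝ) p) q)
    (hnorm : ∀ i, ‖y i‖ = 1)
    (hblock : ∀ i i', i < i' → ∀ j u j' u' : ℕ,
      y i j u ≠ 0 → y i' j' u' ≠ 0 → j < j' ∨ (j = j' ∧ u < u'))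
    (N : ℕ → ℕ) (hNmono : StrictMono N)
    (htrunc : ∀ i, ε ≤ (∑ j ∈ Finset.Ico (N i) (N (i + 1)),
        ‖y i j‖ ^ q.toReal) ^ (1 / q.toReal)) :
    ∀ (a : ℕ → ℝ) (s : Finset ℕ),
      ε * (∑ i ∈ s, |a i| ^ q.toReal) ^ (1 / q.toReal) ≤ ‖∑ i ∈ s, a i • y i‖ ∧
      ‖∑ i ∈ s, a i • y i‖ ≤ (∑ i ∈ s, |a i| ^ q.toReal) ^ (1 / q.toReal) := by
  intro a s
  have hp₀ : 0 < p.toReal := ENNReal.toReal_pos (zero_lt_one.trans_le Fact.out).ne' hp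
  have hq₀ : 0 < q.toReal :=
    ENNReal.toReal_pos (zero_lt_one.trans_le Fact.out).ne' (hqp.trans_le le_top).ne
  have hcols (j : ℕ) : (s : Set ℕ).PairwiseDisjoint fun i => support ((a i • y i) j) :=
    Set.PairwiseDisjoint.mono
      ((lp.pairwise_disjoint_support_apply_of_lex_lt hblock j).set_pairwise _)
      fun i => lp.support_smul_subset (a i) (y i j)
  have hbands : (s : Set ℕ).PairwiseDisjoint fun i => Finset.Ico (N i) (N (i + 1)) :=
    fun i _ i' _ hne => Finset.disjoint_coe.1 (by
      simpa using hNmono.monotone.pairwise_disjoint_on_Ico_succ hne)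
  have hupper : ‖∑ i ∈ s, a i • y i‖ ^ q.toReal ≤ ∑ i ∈ s, |a i| ^ q.toReal := by
    refine (lp.norm_sum_rpow_le_of_pairwiseDisjoint_apply hq₀
      (ENNReal.toReal_mono hp hqp.le) hcols).trans_eq (Finset.sum_congr rfl fun i _ => ?_)
    rw [norm_smul, hnorm, mul_one, Real.norm_eq_abs]
  have hlower : ε ^ q.toReal * ∑ i ∈ s, |a i| ^ q.toReal ≤ ‖∑ i ∈ s, a i • y i‖ ^ q.toReal := by
    refine le_trans ?_
      (lp.sum_sum_rpow_le_norm_sum_rpow_of_pairwiseDisjoint_apply hp₀ hq₀ hcols hbands)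
    rw [Finset.mul_sum]
    refine Finset.sum_le_sum fun i _ => ?_
    simp_rw [lp.coeFn_smul, Pi.smul_apply, norm_smul, Real.norm_eq_abs,
      Real.mul_rpow (abs_nonneg _) (norm_nonneg _), ← Finset.mul_sum, mul_comm (ε ^ q.toReal)]
    gcongr
    exact (Real.le_rpow_inv_iff_of_pos hε.le (by positivity) hq₀).1 (by simpa using htrunc i)
  refine ⟨(Real.mul_rpow_one_div_le_iff hε.le (by positivity) (norm_nonneg _) hq₀).2 hlower, ?_⟩
  rwa [one_div, Real.le_rpow_inv_iff_of_pos (norm_nonneg _) (by positivity) hq₀]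

/-- Let `1 ≤ q < p < ∞` and let `{y_i}` be a normalized block basis of the natural
basis of `Z_{q,p} = (⊕ ℓ_p)_{ℓ_q}` (finitely supported vectors whose supports occupy
pairwise disjoint consecutive sets of coordinates in the column-major ordering) such
that for some integers `0 = N_1 < N_2 < ⋯` one has `‖(Q_{N_{i+1}} − Q_{N_i}) y_i‖ ≥ ε`
for all `i`, where `Q_N` is the projection onto the first `N` columns. Then for all
finitely supported scalars, `ε (Σ|a_i|^q)^{1/q} ≤ ‖Σ a_i y_i‖ ≤ (Σ|a_i|^q)^{1/q}`;
in particular `{y_i}` is equivalent to the unit vector basis of `ℓ_q`. -/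
theorem stmt_18 (p q : ℝ≥0∞) [Fact (1 ≤ p)] [Fact (1 ≤ q)]
    (hqp : q < p) (hp : p ≠ ⊤) (ε : ℝ) (hε : 0 < ε)
    (y : ℕ → lp (fun _ : ℕ => lp (fun _ : ℕ => ℝ) p) q)
    (hnorm : ∀ i, ‖y i‖ = 1)
    (hfin : ∀ i, {ju : ℕ × ℕ | y i ju.1 ju.2 ≠ 0}.Finite)
    (hblock : ∀ i i', i < i' → ∀ j u j' u' : ℕ,
      y i j u ≠ 0 → y i' j' u' ≠ 0 → j < j' ∨ (j = j' ∧ u < u'))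
    (N : ℕ → ℕ) (hN0 : N 0 = 0) (hNmono : StrictMono N)
    (htrunc : ∀ i, ε ≤ (∑ j ∈ Finset.Ico (N i) (N (i + 1)),
        ‖y i j‖ ^ q.toReal) ^ (1 / q.toReal)) :
    ∀ (a : ℕ → ℝ) (s : Finset ℕ),
      ε * (∑ i ∈ s, |a i| ^ q.toReal) ^ (1 / q.toReal) ≤ ‖∑ i ∈ s, a i • y i‖ ∧
      ‖∑ i ∈ s, a i • y i‖ ≤ (∑ i ∈ s, |a i| ^ q.toReal) ^ (1 / q.toReal) :=
  stmt_18_general p q hqp hp ε hε y hnorm hblock N hNmono htrunc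
end
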